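/- arXiv:1701.03529 — 8 statements merged into one kernel-verified Lean document; each statement's English description precedes it below -/
import Mathlib

section
/- For each j with 1 ≤ j ≤ r, the set L_j := { g ∈ K(t) : F_j divides Φ_g in K(t)[x] } (together with the constants of K) is an intermediate field of the extension K(t)/K(f): it contains K(f) and is closed under addition, additive inverses, multiplication, and multiplicative inverses of nonzero elements. -/
open Polynomial

/-- `Φ_g(x) := g_n(x) − g(t)·g_d(x) ∈ K(t)[x]`, where `g = g_n/g_d` with `g_n, g_d` coprime. -/
noncomputable def Phi {K : Type*} [Field K] (g : RatFunc K) : Polynomial (RatFunc K) :=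
  g.num.map (algebraMap K (RatFunc K)) - Polynomial.C g * (g.denom.map (algebraMap K (RatFunc K)))

/-- A rational function is nonconstant if it is not of the form `C c`. -/
def Nonconst {K : Type*} [Field K] (g : RatFunc K) : Prop := ∀ c : K, g ≠ RatFunc.C c

/-!
Let `θ` be a root of `F` in `E = K(t)[x]/(F)`. Then `F ∣ Φ_g` says exactly `g_n(θ) = g(t) g_d(θ)`.
Since `F ∣ Φ_f`, the element `f(t)` of `E` lies in the field `K(θ)`; as `f` is transcendental
over `K`, so is `θ`, and evaluation at `θ` is a `K`-algebra map `K(t) → E`. Hence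
`L = { g : g(θ) = g(t) }` is the equalizer of two `K`-algebra maps `K(t) → E`, a field
containing `f`.
-/

def IntermediateField.equalizer {F K L : Type*} [Field F] [Field K] [Field L] [Algebra F K]
    [Algebra F L] (φ ψ : K →ₐ[F] L) : IntermediateField F K :=
  (AlgHom.equalizer φ ψ).toIntermediateField fun x hx => by
    simp only [AlgHom.mem_equalizer, map_inv₀] at hx ⊢
    rw [hx]

theorem IntermediateField.mem_equalizer {F K L : Type*} [Field F] [Field K] [Field L]
    [Algebra F K] [Algebra F L] {φ ψ : K →ₐ[F] L} {x : K} :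
    x ∈ IntermediateField.equalizer φ ψ ↔ φ x = ψ x :=
  Iff.rfl

theorem Phi_C {K : Type*} [Field K] (c : K) : Phi (RatFunc.C c) = 0 := by
  simp [Phi, RatFunc.algebraMap_eq_C]

namespace RatFunc

variable {K E : Type*} [Field K] [Field E] [Algebra K E]

noncomputable def aevalOfTranscendental {θ : E} (hθ : Transcendental K θ) : RatFunc K →ₐ[K] E :=
  liftAlgHom (aeval θ) <|
    nonZeroDivisors_le_comap_nonZeroDivisors_of_injective _ (transcendental_iff_injective.mp hθ)

theorem aevalOfTranscendental_apply {θ : E} (hθ : Transcendental K θ) (g : RatFunc K) :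
    aevalOfTranscendental hθ g = aeval θ g.num / aeval θ g.denom :=
  liftAlgHom_apply _ _ g

end RatFunc

section Phi

variable {K E : Type*} [Field K] [Field E] [Algebra (RatFunc K) E] [Algebra K E]
  [IsScalarTower K (RatFunc K) E] {θ : E}

theorem aeval_Phi (g : RatFunc K) :
    aeval θ (Phi g) = aeval θ g.num - algebraMap (RatFunc K) E g * aeval θ g.denom := by
  simp only [Phi, map_sub, map_mul, aeval_C, aeval_map_algebraMap]

theorem aeval_denom_ne_zero_of_aeval_Phi_eq_zero {g : RatFunc K} (h : aeval θ (Phi g) = 0) :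
    aeval θ g.denom ≠ 0 := by
  intro hden
  have hnum : aeval θ g.num = 0 := by
    rwa [aeval_Phi, hden, mul_zero, sub_zero] at h
  obtain ⟨a, b, hab⟩ := RatFunc.isCoprime_num_denom g
  simpa [hnum, hden] using congrArg (aeval θ) hab

theorem transcendental_of_aeval_Phi_eq_zero {g : RatFunc K} (hg : ¬∃ c, g = RatFunc.C c)
    (h : aeval θ (Phi g) = 0) : Transcendental K θ := by
  intro hθ
  have aeval_isAlgebraic (p : K[X]) : IsAlgebraic K (aeval θ p) :=
    not_not.mp fun hp => (transcendental_aeval_iff.mp hp).1 hθ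
  have hden := aeval_denom_ne_zero_of_aeval_Phi_eq_zero h
  have hnum : aeval θ g.num = aeval θ g.denom * algebraMap (RatFunc K) E g := by
    rw [← sub_eq_zero, ← h, aeval_Phi, mul_comm]
  have hgE : IsAlgebraic K (algebraMap (RatFunc K) E g) :=
    (aeval_isAlgebraic _).of_mul (mem_nonZeroDivisors_of_ne_zero hden)
      (hnum ▸ aeval_isAlgebraic _)
  exact RatFunc.transcendental_of_ne_C g hg
    ((isAlgebraic_algebraMap_iff (algebraMap (RatFunc K) E).injective).mp hgE)

theorem aeval_Phi_eq_zero_iff_mem_equalizer (hθ : Transcendental K θ) (g : RatFunc K) :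
    aeval θ (Phi g) = 0 ↔ g ∈ IntermediateField.equalizer
      (RatFunc.aevalOfTranscendental hθ) (IsScalarTower.toAlgHom K (RatFunc K) E) := by
  have hden : aeval θ g.denom ≠ 0 :=
    (transcendental_iff_injective.mp hθ).ne_iff' (map_zero _) |>.mpr (RatFunc.denom_ne_zero g)
  rw [IntermediateField.mem_equalizer, RatFunc.aevalOfTranscendental_apply, div_eq_iff hden,
    aeval_Phi, sub_eq_zero, IsScalarTower.toAlgHom_apply]

end Phi

theorem stmt_1_general {K : Type*} [Field K] (f : RatFunc K) (hf : Nonconst f)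
    (F : Polynomial (RatFunc K)) (hFirr : Irreducible F) (hFdvd : F ∣ Phi f)
    (L : Set (RatFunc K))
    (hLdef : L = {g : RatFunc K | F ∣ Phi g ∨ ∃ c : K, g = RatFunc.C c}) :
    (∀ g ∈ (IntermediateField.adjoin K {f} : IntermediateField K (RatFunc K)), g ∈ L) ∧
    (∀ a ∈ L, ∀ b ∈ L, a + b ∈ L) ∧
    (∀ a ∈ L, -a ∈ L) ∧
    (∀ a ∈ L, ∀ b ∈ L, a * b ∈ L) ∧
    (∀ a ∈ L, a ≠ 0 → a⁻¹ ∈ L) := by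
  have : Fact (Irreducible F) := ⟨hFirr⟩
  have dvd_iff (g : RatFunc K) : F ∣ Phi g ↔ aeval (AdjoinRoot.root F) (Phi g) = 0 := by
    rw [AdjoinRoot.aeval_eq, AdjoinRoot.mk_eq_zero]
  have hθ := transcendental_of_aeval_Phi_eq_zero (not_exists.mpr hf) ((dvd_iff f).mp hFdvd)
  set M := IntermediateField.equalizer
    (RatFunc.aevalOfTranscendental hθ) (IsScalarTower.toAlgHom K (RatFunc K) (AdjoinRoot F))
  have hLM : L = M := by
    ext g
    rw [hLdef, Set.mem_ofPred_eq, SetLike.mem_coe, dvd_iff, aeval_Phi_eq_zero_iff_mem_equalizer hθ,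
      or_iff_left_of_imp]
    rintro ⟨c, rfl⟩
    rw [← aeval_Phi_eq_zero_iff_mem_equalizer hθ, Phi_C, map_zero]
  have hfM : f ∈ M := (aeval_Phi_eq_zero_iff_mem_equalizer hθ f).mp ((dvd_iff f).mp hFdvd)
  subst hLM
  exact ⟨fun g hg => IntermediateField.adjoin_simple_le_iff.mpr hfM hg,
    fun _ ha _ hb => M.add_mem ha hb, fun _ ha => M.neg_mem ha,
    fun _ ha _ hb => M.mul_mem ha hb, fun _ ha _ => M.inv_mem ha⟩

/-- For a monic irreducible factor `F` of `Φ_f`, the set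
`L := { g ∈ K(t) : F ∣ Φ_g } ∪ K` is an intermediate field of `K(t)/K(f)`:
it contains `K(f)` and is closed under addition, negation, multiplication and
inverses of nonzero elements. -/
theorem stmt_1 {K : Type*} [Field K] (f : RatFunc K) (hf : Nonconst f)
    (hmonic : (Phi f).Monic)
    (F : Polynomial (RatFunc K)) (hFm : F.Monic) (hFirr : Irreducible F) (hFdvd : F ∣ Phi f)
    (L : Set (RatFunc K))
    (hLdef : L = {g : RatFunc K | F ∣ Phi g ∨ ∃ c : K, g = RatFunc.C c}) :
    (∀ g ∈ (IntermediateField.adjoin K {f} : IntermediateField K (RatFunc K)), g ∈ L) ∧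
    (∀ a ∈ L, ∀ b ∈ L, a + b ∈ L) ∧
    (∀ a ∈ L, -a ∈ L) ∧
    (∀ a ∈ L, ∀ b ∈ L, a * b ∈ L) ∧
    (∀ a ∈ L, a ≠ 0 → a⁻¹ ∈ L) :=
  stmt_1_general f hf F hFirr hFdvd L hLdef
end

section
/- Let K/k be a separable field extension of finite degree n. Then there exists a set {L_1, …, L_r} of intermediate fields of K/k, with r ≤ n, such that for every intermediate field L of K/k there exists a subset I_L ⊆ {1, …, r} with L = ⋂_{i∈I_L} L_i (with the convention that the intersection over the empty set is K). -/
/-!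
Fix an algebraic closure `E` of `K` and, for each of the `n` embeddings `σ : K →ₐ[k] E`, let
`L_σ` be the subfield of `K` on which `σ` agrees with the inclusion `K ⊆ E`. An intermediate
field `M` is the intersection of those `L_σ` that contain it: an element `x` in all of them is
fixed by every `M`-embedding of `K` into `E`, so by separability all conjugates of `x` over `M`
coincide, its minimal polynomial over `M` is linear, and `x ∈ M`.
-/

open IntermediateField Polynomial

namespace AlgHom

variable {F K E : Type*} [Field F] [Field K] [Field E] [Algebra F K] [Algebra F E]

def fieldEqualizer (σ τ : K →ₐ[F] E) : IntermediateField F K :=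
  (equalizer σ τ).toIntermediateField fun x (hx : σ x = τ x) => by
    change σ x⁻¹ = τ x⁻¹
    rw [map_inv₀, map_inv₀, hx]

@[simp]
theorem mem_fieldEqualizer {σ τ : K →ₐ[F] E} {x : K} : x ∈ σ.fieldEqualizer τ ↔ σ x = τ x :=
  Iff.rfl

end AlgHom

section Embeddings

variable {F K E : Type*} [Field F] [Field K] [Field E] [Algebra F K] [Algebra F E]
  [Algebra K E] [IsAlgClosed E] [Algebra.IsSeparable F K]

theorem mem_range_of_forall_algHom_eq {x : K} (h : ∀ σ : K →ₐ[F] E, σ x = algebraMap K E x) :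
    x ∈ (algebraMap F K).range := by
  have hx : IsIntegral F x := Algebra.IsSeparable.isIntegral F x
  have roots_eq : ∀ y ∈ (minpoly F x).rootSet E, y = algebraMap K E x := fun y hy => by
    obtain ⟨σ, rfl⟩ := exists_algHom_of_splits_of_aeval
      (fun s => ⟨Algebra.IsSeparable.isIntegral F s, IsAlgClosed.splits _⟩)
      ((mem_rootSet.mp hy).2)
    exact h σ
  have card_roots : Fintype.card ((minpoly F x).rootSet E) = (minpoly F x).natDegree :=
    card_rootSet_eq_natDegree (Algebra.IsSeparable.isSeparable F x) (IsAlgClosed.splits _)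
  have : Fintype.card ((minpoly F x).rootSet E) ≤ 1 :=
    Fintype.card_le_one_iff.mpr fun a b =>
      Subtype.ext ((roots_eq a a.2).trans (roots_eq b b.2).symm)
  exact minpoly.natDegree_eq_one_iff.mp (by have := minpoly.natDegree_pos hx; omega)

theorem IntermediateField.eq_iInf_fieldEqualizer [IsScalarTower F K E]
    (M : IntermediateField F K) :
    M = ⨅ (σ : K →ₐ[F] E) (_ : M ≤ σ.fieldEqualizer (IsScalarTower.toAlgHom F K E)),
      σ.fieldEqualizer (IsScalarTower.toAlgHom F K E) := by
  refine le_antisymm (le_iInf₂ fun _ hσ => hσ) fun x hx => ?_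
  obtain ⟨y, rfl⟩ := mem_range_of_forall_algHom_eq (F := M) (E := E) (x := x) fun τ => by
    have hτ : M ≤ (τ.restrictScalars F).fieldEqualizer (IsScalarTower.toAlgHom F K E) :=
      fun m hm => AlgHom.mem_fieldEqualizer.mpr (τ.commutes ⟨m, hm⟩)
    exact iInf₂_le (f := fun (σ : K →ₐ[F] E) _ =>
      σ.fieldEqualizer (IsScalarTower.toAlgHom F K E)) _ hτ hx
  exact y.2

end Embeddings

/-- Given a separable field extension `K/k` of finite degree `n`, there exists a set
`{L_1, …, L_r}` of intermediate fields of `K/k`, with `r ≤ n`, such that every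
intermediate field `L` of `K/k` is the intersection `⋂_{i ∈ I_L} L_i` for some
`I_L ⊆ {1,…,r}` (the empty intersection being `K` itself). -/
theorem stmt_5 {k K : Type*} [Field k] [Field K] [Algebra k K]
    [FiniteDimensional k K] [Algebra.IsSeparable k K] :
    ∃ (r : ℕ) (L : Fin r → IntermediateField k K), r ≤ Module.finrank k K ∧
      ∀ M : IntermediateField k K, ∃ I : Finset (Fin r), M = ⨅ i ∈ I, L i := by
  classical
  let E := AlgebraicClosure K
  let e : Fin (Nat.card (K →ₐ[k] E)) ≃ (K →ₐ[k] E) := (Finite.equivFin _).symm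
  let L i := (e i).fieldEqualizer (IsScalarTower.toAlgHom k K E)
  refine ⟨_, L, (Field.finSepDegree_eq_finrank_of_isSeparable k K).le, fun M => ?_⟩
  refine ⟨Finset.univ.filter fun i => M ≤ L i, ?_⟩
  simp only [Finset.mem_filter, Finset.mem_univ, true_and]
  conv_lhs => rw [M.eq_iInf_fieldEqualizer (E := E), ← e.iInf_comp]
end

section
/- Let f = f_n/f_d ∈ K(t) be nonconstant of degree n with f_n, f_d ∈ K[t] coprime and Φ_f monic. Let G_1, …, G_r ∈ K[x,t] be the irreducible factors of ∇_f, normalized so that ∇_f = G_1 ⋯ G_r, and let m_i ∈ K[t] be the leading coefficient of G_i with respect to x. Then m_1 ⋯ m_r = f_d(t), the polynomials F_i := G_i/m_i ∈ K(t)[x] are monic and irreducible, ∇_f/f_d(t) = Φ_f(x) = F_1 ⋯ F_r in K(t)[x], and ∑_{i=1}^r deg_t(G_i) = n = ∑_{i=1}^r deg_x(G_i). -/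
open Polynomial

/-- `∇_g(x,t) := g_n(x)·g_d(t) − g_n(t)·g_d(x) ∈ K[x,t]`, as a polynomial in `x` over `K[t]`. -/
noncomputable def Nabla {K : Type*} [Field K] (g : RatFunc K) : Polynomial (Polynomial K) :=
  g.num.map Polynomial.C * Polynomial.C g.denom - Polynomial.C g.num * (g.denom.map Polynomial.C)

/-- The degree in `t` of a bivariate polynomial `G ∈ K[t][x]`. -/
noncomputable def degT {K : Type*} [Field K] (G : Polynomial (Polynomial K)) : ℕ :=
  G.support.sup fun k => (G.coeff k).natDegree


/-!
Over `K(t)` we have `∇_f = f_d(t) · Φ_f`, so everything reduces to three facts about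
`∇_f ∈ K[t][x]`: its leading coefficient in `x` is `f_d` (because `Φ_f` is monic), its degree
in `x` is `n`, and it is primitive, since its `x`-coefficients `a_k f_d(t) - b_k f_n(t)` span
the `K`-span of `f_n` and `f_d`, whose common divisors are units. Primitivity passes to the
factors `G_i`, so by Gauss's lemma they stay irreducible over `K(t)`. The statement on
`t`-degrees follows from the one on `x`-degrees because swapping `x` and `t` sends `∇_f` to
`-∇_f`.
-/

theorem Polynomial.Bivariate.coeff_coeff_swap {R : Type*} [CommSemiring R] (p : R[X][X])
    (j k : ℕ) :
    ((swap p).coeff j).coeff k = (p.coeff k).coeff j := by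
  induction p using Polynomial.induction_on' with
  | add p q hp hq => simp only [map_add, coeff_add, hp, hq]
  | monomial n a =>
    induction a using Polynomial.induction_on' with
    | add a b ha hb => simp only [map_add, coeff_add, ha, hb]
    | monomial m r =>
      rw [swap_monomial_monomial]
      simp only [coeff_monomial]
      split_ifs <;> simp [coeff_monomial, *]

section degT

open Polynomial.Bivariate

variable {K : Type*} [Field K]

theorem degT_le_iff {G : K[X][X]} {N : ℕ} :
    degT G ≤ N ↔ ∀ k, (G.coeff k).natDegree ≤ N := by
  refine Finset.sup_le_iff.trans ⟨fun h k => ?_, fun h k _ => h k⟩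
  by_cases hk : G.coeff k = 0
  · simp [hk]
  · exact h k (mem_support_iff.mpr hk)

theorem degT_eq_natDegree_swap (G : K[X][X]) : degT G = (swap G).natDegree := by
  refine eq_of_forall_ge_iff fun N => ?_
  simp only [degT_le_iff, natDegree_le_iff_coeff_eq_zero, Polynomial.ext_iff, coeff_zero,
    coeff_coeff_swap]
  exact ⟨fun h j hj k => h k j hj, fun h k j hj => h j hj k⟩

theorem degT_prod {ι : Type*} (s : Finset ι) (G : ι → K[X][X]) (hG : ∀ i ∈ s, G i ≠ 0) :
    degT (∏ i ∈ s, G i) = ∑ i ∈ s, degT (G i) := by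
  simp only [degT_eq_natDegree_swap, map_prod]
  exact natDegree_prod _ _ fun i hi => (map_ne_zero_iff _ swap.injective).mpr (hG i hi)

end degT

section nablaPoly

variable {K : Type*} [Field K]

noncomputable def nablaPoly (a b : K[X]) : K[X][X] :=
  a.map C * C b - C a * b.map C

theorem Nabla_eq_nablaPoly (f : RatFunc K) : Nabla f = nablaPoly f.num f.denom := rfl

variable {a b : K[X]}

theorem coeff_nablaPoly (k : ℕ) :
    (nablaPoly a b).coeff k = C (a.coeff k) * b - C (b.coeff k) * a := by
  simp only [nablaPoly, coeff_sub, coeff_mul_C, coeff_C_mul, coeff_map]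
  ring

theorem natDegree_nablaPoly (hab : LinearIndependent K ![a, b]) :
    (nablaPoly a b).natDegree = max a.natDegree b.natDegree := by
  set n := max a.natDegree b.natDegree
  refine le_antisymm (natDegree_le_iff_coeff_eq_zero.mpr fun k hk => ?_)
    (le_natDegree_of_ne_zero fun h => ?_)
  · rw [coeff_nablaPoly, coeff_eq_zero_of_natDegree_lt ((le_max_left _ _).trans_lt hk),
      coeff_eq_zero_of_natDegree_lt ((le_max_right _ _).trans_lt hk)]
    simp
  · rw [coeff_nablaPoly, sub_eq_zero, ← smul_eq_C_mul, ← smul_eq_C_mul, eq_comm,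
      ← sub_eq_zero, sub_eq_add_neg, ← neg_smul] at h
    obtain ⟨hbn, han⟩ := LinearIndependent.pair_iff.mp hab _ _ h
    have ha : a ≠ 0 := hab.ne_zero 0
    have hb : b ≠ 0 := hab.ne_zero 1
    rcases max_choice a.natDegree b.natDegree with hn | hn
    · exact leadingCoeff_ne_zero.mpr ha (by rw [leadingCoeff, ← hn]; exact neg_eq_zero.mp han)
    · exact leadingCoeff_ne_zero.mpr hb (by rw [leadingCoeff, ← hn]; exact hbn)

theorem isPrimitive_nablaPoly (hcop : IsCoprime a b) (hab : LinearIndependent K ![a, b]) :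
    (nablaPoly a b).IsPrimitive := by
  intro s hs
  have hsk : ∀ k, s ∣ C (a.coeff k) * b - C (b.coeff k) * a := fun k =>
    coeff_nablaPoly (a := a) (b := b) k ▸ (C_dvd_iff_dvd_coeff _ _).mp hs k
  set l := b.natDegree
  have hβ : b.coeff l ≠ 0 := leadingCoeff_ne_zero.mpr (hab.ne_zero 1)
  -- the coefficients `a_k • b - b_k • a` span `K a + K b`, so `s` divides `b` and then `a`
  obtain ⟨k, hk⟩ : ∃ k, a.coeff k * b.coeff l - a.coeff l * b.coeff k ≠ 0 := by
    by_contra! h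
    refine hβ (LinearIndependent.pair_iff.mp hab (b.coeff l) (-a.coeff l) ?_).1
    ext k
    simp [← sub_eq_zero.mp (h k), mul_comm]
  have hsb : s ∣ b := by
    have := dvd_sub ((hsk k).mul_left (C (b.coeff l))) ((hsk l).mul_left (C (b.coeff k)))
    rw [show C (b.coeff l) * (C (a.coeff k) * b - C (b.coeff k) * a) -
        C (b.coeff k) * (C (a.coeff l) * b - C (b.coeff l) * a) =
        C (a.coeff k * b.coeff l - a.coeff l * b.coeff k) * b by
      simp only [map_sub, map_mul]; ring] at this
    exact (isUnit_C.mpr hk.isUnit).dvd_mul_left.mp this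
  have hsa : s ∣ a := by
    have := dvd_sub (hsb.mul_left (C (a.coeff l))) (hsk l)
    rw [sub_sub_cancel] at this
    exact (isUnit_C.mpr hβ.isUnit).dvd_mul_left.mp this
  exact hcop.isUnit_of_dvd' hsa hsb

theorem swap_nablaPoly : Bivariate.swap (nablaPoly a b) = -nablaPoly a b := by
  rw [nablaPoly, map_sub, map_mul, map_mul, Bivariate.swap_C, Bivariate.swap_map_C,
    Bivariate.swap_C, Bivariate.swap_map_C]
  ring

end nablaPoly

section FractionMap

variable {R F : Type*} [CommRing R] [Field F] [Algebra R F] [IsFractionRing R F]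
  {p : R[X]}

theorem monic_C_inv_leadingCoeff_mul_map (hp : p ≠ 0) :
    (C ((algebraMap R F p.leadingCoeff)⁻¹) * p.map (algebraMap R F)).Monic := by
  rw [mul_comm, ← leadingCoeff_map_of_injective (IsFractionRing.injective R F)]
  exact monic_mul_leadingCoeff_inv
    ((Polynomial.map_ne_zero_iff (IsFractionRing.injective R F)).mpr hp)

theorem irreducible_C_inv_leadingCoeff_mul_map [IsDomain R] [IsGCDMonoid R]
    (hprim : p.IsPrimitive) (hirr : Irreducible p) :
    Irreducible (C ((algebraMap R F p.leadingCoeff)⁻¹) * p.map (algebraMap R F)) := by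
  have hlc : algebraMap R F p.leadingCoeff ≠ 0 :=
    (map_ne_zero_iff _ (IsFractionRing.injective R F)).mpr (leadingCoeff_ne_zero.mpr hirr.ne_zero)
  exact (irreducible_isUnit_mul (isUnit_C.mpr (inv_ne_zero hlc).isUnit)).mpr
    (hprim.irreducible_iff_irreducible_map_fraction_map.mp hirr)

end FractionMap

section RatFunc

variable {K : Type*} [Field K] {f : RatFunc K}

theorem linearIndependent_num_denom (hf : Nonconst f) :
    LinearIndependent K ![f.num, f.denom] := by
  refine LinearIndependent.pair_symm_iff.mp
    ((LinearIndependent.pair_iff' f.denom_ne_zero).mpr fun c hc => hf c ?_)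
  rw [← RatFunc.num_div_denom f, ← hc, smul_eq_C_mul, map_mul, RatFunc.algebraMap_C,
    mul_div_cancel_right₀ _ (RatFunc.algebraMap_ne_zero f.denom_ne_zero)]

theorem map_Nabla (f : RatFunc K) :
    (Nabla f).map (algebraMap K[X] (RatFunc K)) =
      C (algebraMap K[X] (RatFunc K) f.denom) * Phi f := by
  have hnum : algebraMap K[X] (RatFunc K) f.num = f * algebraMap K[X] (RatFunc K) f.denom :=
    (div_eq_iff (RatFunc.algebraMap_ne_zero f.denom_ne_zero)).mp (RatFunc.num_div_denom f)
  have hC : (algebraMap K[X] (RatFunc K)).comp C = algebraMap K (RatFunc K) := by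
    rw [IsScalarTower.algebraMap_eq K K[X] (RatFunc K), algebraMap_eq]
  rw [Nabla, Phi, Polynomial.map_sub, Polynomial.map_mul, Polynomial.map_mul, map_map, map_C,
    map_C, map_map, hC, hnum, C_mul]
  ring

theorem leadingCoeff_Nabla (hmonic : (Phi f).Monic) : (Nabla f).leadingCoeff = f.denom := by
  apply RatFunc.algebraMap_injective K
  rw [← leadingCoeff_map_of_injective (RatFunc.algebraMap_injective K), map_Nabla,
    leadingCoeff_mul, leadingCoeff_C, hmonic.leadingCoeff, mul_one]

theorem natDegree_Nabla (hf : Nonconst f) :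
    (Nabla f).natDegree = max f.num.natDegree f.denom.natDegree :=
  natDegree_nablaPoly (linearIndependent_num_denom hf)

theorem degT_Nabla (hf : Nonconst f) :
    degT (Nabla f) = max f.num.natDegree f.denom.natDegree := by
  rw [degT_eq_natDegree_swap, Nabla_eq_nablaPoly, swap_nablaPoly, natDegree_neg,
    ← Nabla_eq_nablaPoly, natDegree_Nabla hf]

theorem isPrimitive_Nabla (hf : Nonconst f) : (Nabla f).IsPrimitive :=
  isPrimitive_nablaPoly f.isCoprime_num_denom (linearIndependent_num_denom hf)

end RatFunc

/-- Let `f = f_n/f_d` be nonconstant of degree `n` with `Φ_f` monic, and let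
`G_1, …, G_r` be the irreducible factors of `∇_f` with `∇_f = G_1 ⋯ G_r`; let `m_i` be
the leading coefficient of `G_i` in `x`.  Then `m_1 ⋯ m_r = f_d`, the `F_i := G_i/m_i`
are monic and irreducible in `K(t)[x]`, `∇_f/f_d = Φ_f = F_1 ⋯ F_r`, and
`∑ deg_t G_i = n = ∑ deg_x G_i`. -/
theorem stmt_6 {K : Type*} [Field K] (f : RatFunc K) (hf : Nonconst f)
    (hmonic : (Phi f).Monic)
    (n : ℕ) (hn : n = max f.num.natDegree f.denom.natDegree)
    (r : ℕ) (G : Fin r → Polynomial (Polynomial K))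
    (hGirr : ∀ i, Irreducible (G i)) (hfact : Nabla f = ∏ i, G i) :
    (∏ i, (G i).leadingCoeff) = f.denom ∧
    (∀ i, (Polynomial.C ((algebraMap (Polynomial K) (RatFunc K) (G i).leadingCoeff)⁻¹) *
        (G i).map (algebraMap (Polynomial K) (RatFunc K))).Monic) ∧
    (∀ i, Irreducible (Polynomial.C ((algebraMap (Polynomial K) (RatFunc K) (G i).leadingCoeff)⁻¹) *
        (G i).map (algebraMap (Polynomial K) (RatFunc K)))) ∧
    Polynomial.C ((algebraMap (Polynomial K) (RatFunc K) f.denom)⁻¹) *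
        (Nabla f).map (algebraMap (Polynomial K) (RatFunc K)) = Phi f ∧
    Phi f = ∏ i, (Polynomial.C ((algebraMap (Polynomial K) (RatFunc K) (G i).leadingCoeff)⁻¹) *
        (G i).map (algebraMap (Polynomial K) (RatFunc K))) ∧
    (∑ i, degT (G i)) = n ∧
    (∑ i, (G i).natDegree) = n := by
  set A := algebraMap K[X] (RatFunc K)
  have hG0 : ∀ i ∈ Finset.univ, G i ≠ 0 := fun i _ => (hGirr i).ne_zero
  have hlc : ∏ i, (G i).leadingCoeff = f.denom := by
    rw [← leadingCoeff_prod, ← hfact, leadingCoeff_Nabla hmonic]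
  have hPhi : C (A f.denom)⁻¹ * (Nabla f).map A = Phi f := by
    rw [map_Nabla, ← mul_assoc, ← C_mul,
      inv_mul_cancel₀ (RatFunc.algebraMap_ne_zero f.denom_ne_zero), C_1, one_mul]
  have hGprim : ∀ i, (G i).IsPrimitive := fun i =>
    isPrimitive_of_dvd (isPrimitive_Nabla hf)
      (hfact ▸ Finset.dvd_prod_of_mem G (Finset.mem_univ i))
  refine ⟨hlc, fun i => monic_C_inv_leadingCoeff_mul_map (hGirr i).ne_zero,
    fun i => irreducible_C_inv_leadingCoeff_mul_map (hGprim i) (hGirr i), hPhi, ?_, ?_, ?_⟩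
  · rw [Finset.prod_mul_distrib, ← map_prod C, Finset.prod_inv_distrib, ← map_prod, hlc,
      ← Polynomial.map_prod, ← hfact, hPhi]
  · rw [← degT_prod _ _ hG0, ← hfact, degT_Nabla hf, hn]
  · rw [← natDegree_prod _ _ hG0, ← hfact, natDegree_Nabla hf, hn]
end

section
/- Let K be a field and F ∈ K[x] monic and separable. Let O ⊆ K be a subring such that F = g_1 ⋯ g_s = h_1 ⋯ h_s, where all g_j, h_j ∈ O[x] are monic (not necessarily irreducible). Let P ⊆ O be a maximal ideal such that the image of F in (O/P)[x] is separable. If g_j ≡ h_j mod P for every 1 ≤ j ≤ s (coefficientwise congruence), then g_j = h_j for every 1 ≤ j ≤ s. -/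
/-!
Fix `j` and put `H = ∏_{i ≠ j} h_i`, so `g_j ∣ ∏ g = ∏ h = h_j H`. Modulo `P` the product
`ḡ_j H̄ = ∏ ḡ` is separable, so `ḡ_j` and `H̄` are coprime, i.e. the resultant of the monic
polynomials `g_j` and `H` is a unit modulo `P`. In particular it is a nonzero element of
`O ⊆ K`, so `g_j` and `H` are coprime in `K[x]`, whence `g_j ∣ h_j`; both are monic of the
same degree, so they are equal.
-/

open Polynomial

namespace Polynomial

variable {R : Type*} [CommRing R]

theorem Monic.resultant_ne_zero_of_isCoprime_map {k : Type*} [CommRing k] [Nontrivial k]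
    {f g : R[X]} (hf : f.Monic) (hg : g.Monic) (φ : R →+* k)
    (hcop : IsCoprime (f.map φ) (g.map φ)) : resultant f g ≠ 0 := by
  have hunit : IsUnit (φ (resultant f g)) := by
    rw [← resultant_map_map, ← hf.natDegree_map φ, ← hg.natDegree_map φ]
    exact (isUnit_resultant_iff_isCoprime (hf.map φ)).2 hcop
  rintro hzero
  simp [hzero] at hunit

theorem Monic.isCoprime_map_of_resultant_ne_zero {L : Type*} [Field L] {f g : R[X]}
    (hf : f.Monic) (hg : g.Monic) {ψ : R →+* L} (hψ : Function.Injective ψ)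
    (hres : resultant f g ≠ 0) : IsCoprime (f.map ψ) (g.map ψ) := by
  refine (isUnit_resultant_iff_isCoprime (hf.map ψ)).1 ?_
  rw [hf.natDegree_map ψ, hg.natDegree_map ψ, resultant_map_map]
  exact isUnit_iff_ne_zero.2 ((map_ne_zero_iff ψ hψ).2 hres)

theorem Monic.isCoprime_map_of_isCoprime_map {k L : Type*} [CommRing k] [Nontrivial k]
    [Field L] {f g : R[X]} (hf : f.Monic) (hg : g.Monic) (φ : R →+* k) {ψ : R →+* L}
    (hψ : Function.Injective ψ) (hcop : IsCoprime (f.map φ) (g.map φ)) :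
    IsCoprime (f.map ψ) (g.map ψ) :=
  hf.isCoprime_map_of_resultant_ne_zero hg hψ (hf.resultant_ne_zero_of_isCoprime_map hg φ hcop)

theorem eq_of_prod_eq_of_map_eq {ι k L : Type*} [Fintype ι] [DecidableEq ι] [CommRing k]
    [Nontrivial k] [Field L] (φ : R →+* k) {ψ : R →+* L} (hψ : Function.Injective ψ)
    {g h : ι → R[X]} (hg : ∀ i, (g i).Monic) (hh : ∀ i, (h i).Monic)
    (hprod : ∏ i, g i = ∏ i, h i) (hsep : ((∏ i, g i).map φ).Separable)
    (hcong : ∀ i, (g i).map φ = (h i).map φ) (j : ι) : g j = h j := by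
  set H := ∏ i ∈ Finset.univ.erase j, h i
  have hsplit : ∏ i, h i = h j * H := (Finset.mul_prod_erase _ _ (Finset.mem_univ j)).symm
  have hH : H.Monic := monic_prod_of_monic _ _ fun i _ ↦ hh i
  have hcopφ : IsCoprime ((g j).map φ) (H.map φ) := by
    rw [hprod, hsplit, Polynomial.map_mul, ← hcong j] at hsep
    exact hsep.isCoprime
  have hcopψ : IsCoprime ((g j).map ψ) (H.map ψ) :=
    (hg j).isCoprime_map_of_isCoprime_map hH φ hψ hcopφ
  have hdvd : (g j).map ψ ∣ (h j).map ψ * H.map ψ := by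
    rw [← Polynomial.map_mul, ← hsplit, ← hprod]
    exact Polynomial.map_dvd ψ (Finset.dvd_prod_of_mem g (Finset.mem_univ j))
  have hdeg : ((h j).map ψ).natDegree ≤ ((g j).map ψ).natDegree := by
    rw [(hh j).natDegree_map, (hg j).natDegree_map, ← (hg j).natDegree_map φ,
      ← (hh j).natDegree_map φ, hcong j]
  exact map_injective ψ hψ (eq_of_monic_of_dvd_of_natDegree_le ((hg j).map ψ)
    ((hh j).map ψ) (hcopψ.dvd_of_dvd_mul_right hdvd) hdeg).symm

end Polynomial

theorem stmt_13_general {K : Type*} [Field K] (O : Subring K) (P : Ideal O) (hP : P.IsMaximal)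
    (s : ℕ) (g h : Fin s → Polynomial O)
    (hg : ∀ j, (g j).Monic) (hh : ∀ j, (h j).Monic)
    (F : Polynomial K)
    (hgF : (∏ j, g j).map O.subtype = F)
    (hhF : (∏ j, h j).map O.subtype = F)
    (hFsepP : ((∏ j, g j).map (Ideal.Quotient.mk P)).Separable)
    (hcong : ∀ j, (g j).map (Ideal.Quotient.mk P) = (h j).map (Ideal.Quotient.mk P)) :
    ∀ j, g j = h j := by
  have : Nontrivial (O ⧸ P) := Ideal.Quotient.nontrivial_iff.2 hP.ne_top
  have hprod : ∏ j, g j = ∏ j, h j :=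
    map_injective _ Subtype.val_injective (hgF.trans hhF.symm)
  exact eq_of_prod_eq_of_map_eq (Ideal.Quotient.mk P) (ψ := O.subtype) Subtype.val_injective
    hg hh hprod hFsepP hcong

/-- Let `K` be a field, `F ∈ K[x]` monic and separable, and `O ⊆ K` a subring with
`F = g_1 ⋯ g_s = h_1 ⋯ h_s`, all `g_j, h_j ∈ O[x]` monic.  Let `P ⊆ O` be a maximal
ideal such that the image of `F` in `(O/P)[x]` is separable.  If `g_j ≡ h_j mod P`
for every `j`, then `g_j = h_j` for every `j`. -/
theorem stmt_13 {K : Type*} [Field K] (O : Subring K) (P : Ideal O) (hP : P.IsMaximal)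
    (s : ℕ) (g h : Fin s → Polynomial O)
    (hg : ∀ j, (g j).Monic) (hh : ∀ j, (h j).Monic)
    (F : Polynomial K) (hFm : F.Monic) (hFsep : F.Separable)
    (hgF : (∏ j, g j).map O.subtype = F)
    (hhF : (∏ j, h j).map O.subtype = F)
    (hFsepP : ((∏ j, g j).map (Ideal.Quotient.mk P)).Separable)
    (hcong : ∀ j, (g j).map (Ideal.Quotient.mk P) = (h j).map (Ideal.Quotient.mk P)) :
    ∀ j, g j = h j :=
  stmt_13_general O P hP s g h hg hh F hgF hhF hFsepP hcong
end

section
/- For every intermediate field L with K(f) ⊆ L ⊆ K(t) there exists a unique partition P_L of {1, …, r} such that every P_L-product has all coefficients in L and the number of parts of P_L is maximal with this property. Moreover, every partition Q of {1, …, r} all of whose Q-products have coefficients in L is a coarsening of P_L (P_L refines Q), and the parts of P_L correspond exactly to the monic irreducible factors of Φ_f over L: each such irreducible factor equals the product of the F_j with j in one part of P_L. -/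
/-!
Since `K(f) ⊆ L`, the polynomial `Φ_f` lifts to a monic `φ ∈ L[x]`. The `F_j` are pairwise
distinct (`Φ_f` is separable), so every monic divisor of `Φ_f` is a subproduct `∏_{j ∈ A} F_j`;
in particular the monic irreducible factors of `φ` over `L` cut `{1, …, r}` into a partition
`P_L`. If the `Q`-products of a partition `Q` lie in `L[x]`, an irreducible factor of `φ` is
prime in `L[x]` and divides their product, hence one of them: `P_L` refines `Q`. Refining can
only increase the number of parts, and a refinement with no more parts is an equality, which
gives maximality and uniqueness of `P_L`.
-/

open Polynomial

/-- All the `P`-products `∏_{j ∈ A} F_j`, for `A` a part of the partition `P`, have all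
their coefficients in the set `L`. -/
def ProdsIn {K : Type*} [Field K] {r : ℕ} (F : Fin r → Polynomial (RatFunc K))
    (L : Set (RatFunc K)) (P : Finpartition (Finset.univ : Finset (Fin r))) : Prop :=
  ∀ A ∈ P.parts, ∀ m, (∏ j ∈ A, F j).coeff m ∈ L

open Finset

namespace Finpartition

variable {α : Type*} [DecidableEq α] {s : Finset α}

theorem eq_of_le_of_card_le {P Q : Finpartition s} (hPQ : P ≤ Q) (hcard : #P.parts ≤ #Q.parts) :
    P = Q := by
  -- `g` picks a part of `P` inside each part of `Q`; it is injective, so by counting it is onto.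
  choose g hgP hgB using fun B (hB : B ∈ Q.parts) ↦ exists_le_of_le hPQ hB
  have hg_inj : ∀ B B' hB hB', g B hB = g B' hB' → B = B' := by
    intro B B' hB hB' h
    obtain ⟨x, hx⟩ := P.nonempty_of_mem_parts (hgP B hB)
    exact Q.eq_of_mem_parts hB hB' (hgB B hB hx) (hgB B' hB' (h ▸ hx))
  have hg_surj := surj_on_of_inj_on_of_card_le g hgP hg_inj hcard
  refine le_antisymm hPQ fun B hB ↦ ⟨g B hB, hgP B hB, fun x hx ↦ ?_⟩
  obtain ⟨A, hA, hxA⟩ := P.exists_mem (Q.le hB hx)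
  obtain ⟨B', hB', rfl⟩ := hg_surj A hA
  obtain rfl := Q.eq_of_mem_parts hB hB' hx (hgB B' hB' hxA)
  exact hxA

theorem prod_prod_parts {β : Type*} [CommMonoid β] (P : Finpartition s) (f : α → β) :
    ∏ B ∈ P.parts, ∏ a ∈ B, f a = ∏ a ∈ s, f a := by
  conv_rhs => rw [← P.biUnion_parts]
  exact (prod_biUnion P.disjoint).symm

end Finpartition

theorem Finset.injective_of_squarefree_prod {ι M : Type*} [Fintype ι] [CommMonoid M]
    {F : ι → M} (h : Squarefree (∏ j, F j)) (hF : ∀ j, ¬IsUnit (F j)) :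
    Function.Injective F := by
  classical
  intro j k hjk
  by_contra hne
  refine hF j (h (F j) ?_)
  rw [← mul_prod_erase _ F (mem_univ j),
    ← mul_prod_erase _ F (mem_erase.2 ⟨Ne.symm hne, mem_univ k⟩), ← hjk, ← mul_assoc]
  exact dvd_mul_right _ _

namespace Polynomial

variable {E ι : Type*} [Field E] {F : ι → E[X]}

section Subproducts

theorem eq_of_dvd_of_monic_of_irreducible (hFm : ∀ j, (F j).Monic)
    (hFirr : ∀ j, Irreducible (F j)) (hF : Function.Injective F) {j k : ι} (h : F j ∣ F k) :
    j = k :=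
  hF <| eq_of_monic_of_associated (hFm j) (hFm k) ((hFirr j).associated_of_dvd (hFirr k) h)

theorem mem_of_dvd_prod (hFm : ∀ j, (F j).Monic) (hFirr : ∀ j, Irreducible (F j))
    (hF : Function.Injective F) {s : Finset ι} {j : ι} (h : F j ∣ ∏ k ∈ s, F k) : j ∈ s := by
  obtain ⟨k, hk, hjk⟩ := (hFirr j).prime.exists_mem_finset_dvd h
  rwa [eq_of_dvd_of_monic_of_irreducible hFm hFirr hF hjk]

theorem subset_of_prod_dvd_prod (hFm : ∀ j, (F j).Monic) (hFirr : ∀ j, Irreducible (F j))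
    (hF : Function.Injective F) {A B : Finset ι} (h : ∏ j ∈ A, F j ∣ ∏ j ∈ B, F j) : A ⊆ B :=
  fun _ hj ↦ mem_of_dvd_prod hFm hFirr hF ((dvd_prod_of_mem F hj).trans h)

theorem exists_subset_eq_prod_of_dvd_prod (hFm : ∀ j, (F j).Monic)
    (hFirr : ∀ j, Irreducible (F j)) (hF : Function.Injective F) {s : Finset ι} {g : E[X]}
    (hg : g.Monic) (h : g ∣ ∏ j ∈ s, F j) : ∃ A ⊆ s, g = ∏ j ∈ A, F j := by
  classical
  -- `A` collects the `F j` dividing `g`: they are pairwise coprime, and `g` is coprime to the rest.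
  have hcop : ∀ j {p}, ¬F j ∣ p → IsCoprime (F j) p := fun j ↦ (hFirr j).coprime_iff_not_dvd.2
  refine ⟨s.filter (F · ∣ g), filter_subset _ _, eq_of_monic_of_associated hg
    (monic_prod_of_monic _ _ fun j _ ↦ hFm j) (associated_of_dvd_dvd ?_ ?_)⟩
  · rw [← prod_filter_mul_prod_filter_not s (F · ∣ g)] at h
    refine (IsCoprime.prod_left fun j hj ↦ ?_).symm.dvd_of_dvd_mul_right h
    exact hcop j (mem_filter.1 hj).2
  · refine prod_dvd_of_coprime (fun j _ k _ hjk ↦ hcop j fun hdvd ↦ hjk ?_)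
      fun j hj ↦ (mem_filter.1 hj).2
    exact eq_of_dvd_of_monic_of_irreducible hFm hFirr hF hdvd

end Subproducts

section Lifts

variable [DecidableEq ι] {L : Type*} [Field L] (i : L →+* E)

def PartsIrreducibleOver (F : ι → E[X]) {s : Finset ι} (P : Finpartition s) : Prop :=
  ∀ A ∈ P.parts, ∃ q : L[X], q.Monic ∧ Irreducible q ∧ q.map i = ∏ j ∈ A, F j

theorem PartsIrreducibleOver.prod_mem_lifts {s : Finset ι} {P : Finpartition s}
    (hP : PartsIrreducibleOver i F P) : ∀ A ∈ P.parts, ∏ j ∈ A, F j ∈ lifts i := by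
  intro A hA
  obtain ⟨q, -, -, hq⟩ := hP A hA
  exact (mem_lifts _).2 ⟨q, hq⟩

theorem exists_partsIrreducibleOver (hFm : ∀ j, (F j).Monic)
    (hFirr : ∀ j, Irreducible (F j)) (hF : Function.Injective F) (s : Finset ι) {φ : L[X]}
    (hφ : φ.Monic) (hmap : φ.map i = ∏ j ∈ s, F j) :
    ∃ P : Finpartition s, PartsIrreducibleOver i F P := by
  induction s using Finset.strongInduction generalizing φ with
  | H s ih =>
    rcases s.eq_empty_or_nonempty with rfl | ⟨j, hj⟩
    · exact ⟨(Finpartition.empty _).copy bot_eq_empty, by simp [PartsIrreducibleOver]⟩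
    have hφu : ¬IsUnit φ := fun hu ↦ (hFirr j).not_isUnit <| isUnit_of_dvd_one <|
      (dvd_prod_of_mem F hj).trans (by rw [← hmap, hφ.eq_one_of_isUnit hu, Polynomial.map_one])
    obtain ⟨q, hqm, hqi, c, rfl⟩ := exists_monic_irreducible_factor φ hφu
    obtain ⟨A, hAs, hA⟩ := exists_subset_eq_prod_of_dvd_prod hFm hFirr hF (hqm.map i)
      (hmap ▸ map_dvd i (dvd_mul_right q c))
    have hAne : A.Nonempty := by
      rw [nonempty_iff_ne_empty]
      rintro rfl
      have hq1 : q.map i = (1 : L[X]).map i := by rw [hA, prod_empty, Polynomial.map_one]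
      exact hqi.not_isUnit (map_injective i i.injective hq1 ▸ isUnit_one)
    have hcmap : c.map i = ∏ j ∈ s \ A, F j := by
      refine mul_left_cancel₀ (hqm.map i).ne_zero ?_
      rw [← Polynomial.map_mul, hmap, hA, ← prod_sdiff hAs, mul_comm]
    obtain ⟨P, hP⟩ := ih (s \ A) (sdiff_ssubset hAs hAne) (hqm.of_mul_monic_left hφ) hcmap
    refine ⟨P.extend hAne.ne_empty sdiff_disjoint (sdiff_union_of_subset hAs), fun B hB ↦ ?_⟩
    rw [Finpartition.extend_parts, mem_insert] at hB
    rcases hB with rfl | hB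
    exacts [⟨q, hqm, hqi, hA⟩, hP B hB]

theorem exists_mem_parts_map_dvd_prod {s : Finset ι} (Q : Finpartition s)
    (hQ : ∀ B ∈ Q.parts, ∏ j ∈ B, F j ∈ lifts i) {q : L[X]} (hq : Prime q)
    (hdvd : q.map i ∣ ∏ j ∈ s, F j) : ∃ B ∈ Q.parts, q.map i ∣ ∏ j ∈ B, F j := by
  choose ψ hψ using fun B : Q.parts ↦ (mem_lifts _).1 (hQ B B.2)
  have hprod : (∏ B, ψ B).map i = ∏ j ∈ s, F j := by
    rw [Polynomial.map_prod, ← Q.prod_prod_parts, ← prod_coe_sort Q.parts]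
    exact prod_congr rfl fun B _ ↦ hψ B
  rw [← hprod, map_dvd_map'] at hdvd
  obtain ⟨B, -, hB⟩ := hq.exists_mem_finset_dvd hdvd
  exact ⟨B, B.2, hψ B ▸ map_dvd i hB⟩

theorem PartsIrreducibleOver.le (hFm : ∀ j, (F j).Monic) (hFirr : ∀ j, Irreducible (F j))
    (hF : Function.Injective F) {s : Finset ι} {P Q : Finpartition s}
    (hP : PartsIrreducibleOver i F P) (hQ : ∀ B ∈ Q.parts, ∏ j ∈ B, F j ∈ lifts i) : P ≤ Q := by
  intro A hA
  obtain ⟨q, -, hqi, hq⟩ := hP A hA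
  obtain ⟨B, hB, hdvd⟩ := exists_mem_parts_map_dvd_prod i Q hQ hqi.prime
    (hq ▸ prod_dvd_prod_of_subset _ _ _ (P.le hA))
  exact ⟨B, hB, subset_of_prod_dvd_prod hFm hFirr hF (hq ▸ hdvd)⟩

theorem PartsIrreducibleOver.exists_eq_of_map_dvd {s : Finset ι} {P : Finpartition s}
    (hP : PartsIrreducibleOver i F P) {q : L[X]} (hqm : q.Monic) (hqi : Irreducible q)
    (hdvd : q.map i ∣ ∏ j ∈ s, F j) : ∃ A ∈ P.parts, q.map i = ∏ j ∈ A, F j := by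
  obtain ⟨A, hA, hdvdA⟩ := exists_mem_parts_map_dvd_prod i P (hP.prod_mem_lifts i) hqi.prime hdvd
  obtain ⟨qA, hqAm, hqAi, hqA⟩ := hP A hA
  rw [← hqA, map_dvd_map'] at hdvdA
  refine ⟨A, hA, ?_⟩
  rw [← hqA, eq_of_monic_of_associated hqm hqAm (hqi.associated_of_dvd hqAi hdvdA)]

end Lifts

end Polynomial

section RatFunc

variable {K : Type*} [Field K] {L : IntermediateField K (RatFunc K)}

theorem Phi_mem_lifts {f : RatFunc K} (hf : f ∈ L) :
    Phi f ∈ lifts (algebraMap L (RatFunc K)) := by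
  refine (lifts_iff_coeff_lifts _).2 fun m ↦ ⟨⟨(Phi f).coeff m, ?_⟩, rfl⟩
  simp only [Phi, coeff_sub, coeff_map, coeff_C_mul]
  exact sub_mem (L.algebraMap_mem _) (mul_mem hf (L.algebraMap_mem _))

theorem prodsIn_iff_forall_prod_mem_lifts {r : ℕ} {F : Fin r → (RatFunc K)[X]}
    {Q : Finpartition (univ : Finset (Fin r))} :
    ProdsIn F L Q ↔ ∀ B ∈ Q.parts, ∏ j ∈ B, F j ∈ lifts (algebraMap L (RatFunc K)) := by
  simp only [ProdsIn, lifts_iff_coeff_lifts]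
  refine forall₂_congr fun B _ ↦ forall_congr' fun m ↦ ⟨fun h ↦ ⟨⟨_, h⟩, rfl⟩, ?_⟩
  rintro ⟨x, hx⟩
  exact hx ▸ x.2

end RatFunc

theorem stmt_15_general {K : Type*} [Field K] (f : RatFunc K)
    (hsep : (Phi f).Separable)
    (r : ℕ) (F : Fin r → Polynomial (RatFunc K))
    (hFm : ∀ j, (F j).Monic) (hFirr : ∀ j, Irreducible (F j))
    (hfact : Phi f = ∏ j, F j)
    (L : IntermediateField K (RatFunc K)) (hL : IntermediateField.adjoin K {f} ≤ L) :
    (∃! P : Finpartition (Finset.univ : Finset (Fin r)),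
        ProdsIn F (L : Set (RatFunc K)) P ∧
        ∀ Q : Finpartition (Finset.univ : Finset (Fin r)),
          ProdsIn F (L : Set (RatFunc K)) Q → Q.parts.card ≤ P.parts.card) ∧
    ∀ P : Finpartition (Finset.univ : Finset (Fin r)),
      (ProdsIn F (L : Set (RatFunc K)) P ∧
        ∀ Q : Finpartition (Finset.univ : Finset (Fin r)),
          ProdsIn F (L : Set (RatFunc K)) Q → Q.parts.card ≤ P.parts.card) →
      ((∀ Q : Finpartition (Finset.univ : Finset (Fin r)),
          ProdsIn F (L : Set (RatFunc K)) Q → ∀ A ∈ P.parts, ∃ B ∈ Q.parts, A ⊆ B) ∧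
       (∀ A ∈ P.parts, ∃ q : Polynomial L, q.Monic ∧ Irreducible q ∧
          q.map (algebraMap L (RatFunc K)) = ∏ j ∈ A, F j) ∧
       (∀ q : Polynomial L, q.Monic → Irreducible q →
          q.map (algebraMap L (RatFunc K)) ∣ Phi f →
          ∃ A ∈ P.parts, q.map (algebraMap L (RatFunc K)) = ∏ j ∈ A, F j)) := by
  have hF : Function.Injective F :=
    injective_of_squarefree_prod (hfact ▸ hsep.squarefree) fun j ↦ (hFirr j).not_isUnit
  obtain ⟨φ, hφ, -, hφm⟩ := lifts_and_degree_eq_and_monic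
    (Phi_mem_lifts (hL (IntermediateField.mem_adjoin_simple_self K f)))
    (hfact ▸ monic_prod_of_monic _ _ fun j _ ↦ hFm j)
  obtain ⟨PL, hPL⟩ := exists_partsIrreducibleOver _ hFm hFirr hF univ hφm (hφ.trans hfact)
  have hPL_le : ∀ Q, ProdsIn F L Q → PL ≤ Q := fun Q hQ ↦
    hPL.le _ hFm hFirr hF (prodsIn_iff_forall_prod_mem_lifts.1 hQ)
  have hPL_prodsIn : ProdsIn F L PL :=
    prodsIn_iff_forall_prod_mem_lifts.2 (hPL.prod_mem_lifts _)
  have hPL_unique : ∀ P, (ProdsIn F L P ∧ ∀ Q, ProdsIn F L Q → #Q.parts ≤ #P.parts) → P = PL :=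
    fun P hP ↦ (Finpartition.eq_of_le_of_card_le (hPL_le P hP.1) (hP.2 PL hPL_prodsIn)).symm
  refine ⟨⟨PL, ⟨hPL_prodsIn, fun Q hQ ↦ Finpartition.card_mono (hPL_le Q hQ)⟩, hPL_unique⟩,
    fun P hP ↦ ?_⟩
  obtain rfl := hPL_unique P hP
  exact ⟨fun Q hQ _ hA ↦ hPL_le Q hQ hA, hPL,
    fun q hqm hqi hdvd ↦ hPL.exists_eq_of_map_dvd _ hqm hqi (hfact ▸ hdvd)⟩

/-- For every intermediate field `L` of `K(t)/K(f)` there is a unique partition `P_L`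
of `{1,…,r}` whose products have all coefficients in `L` and whose number of parts is
maximal with this property; every partition `Q` whose products lie in `L[x]` is
coarsened by `P_L`, and the parts of `P_L` correspond exactly to the monic irreducible
factors of `Φ_f` over `L`. -/
theorem stmt_15 {K : Type*} [Field K] (f : RatFunc K) (hf : Nonconst f)
    (hmonic : (Phi f).Monic) (hsep : (Phi f).Separable)
    (r : ℕ) (hr : 0 < r) (F : Fin r → Polynomial (RatFunc K))
    (hFm : ∀ j, (F j).Monic) (hFirr : ∀ j, Irreducible (F j))
    (hfact : Phi f = ∏ j, F j)
    (hF1 : F ⟨0, hr⟩ = Polynomial.X - Polynomial.C RatFunc.X)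
    (L : IntermediateField K (RatFunc K)) (hL : IntermediateField.adjoin K {f} ≤ L) :
    (∃! P : Finpartition (Finset.univ : Finset (Fin r)),
        ProdsIn F (L : Set (RatFunc K)) P ∧
        ∀ Q : Finpartition (Finset.univ : Finset (Fin r)),
          ProdsIn F (L : Set (RatFunc K)) Q → Q.parts.card ≤ P.parts.card) ∧
    ∀ P : Finpartition (Finset.univ : Finset (Fin r)),
      (ProdsIn F (L : Set (RatFunc K)) P ∧
        ∀ Q : Finpartition (Finset.univ : Finset (Fin r)),
          ProdsIn F (L : Set (RatFunc K)) Q → Q.parts.card ≤ P.parts.card) →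
      ((∀ Q : Finpartition (Finset.univ : Finset (Fin r)),
          ProdsIn F (L : Set (RatFunc K)) Q → ∀ A ∈ P.parts, ∃ B ∈ Q.parts, A ⊆ B) ∧
       (∀ A ∈ P.parts, ∃ q : Polynomial L, q.Monic ∧ Irreducible q ∧
          q.map (algebraMap L (RatFunc K)) = ∏ j ∈ A, F j) ∧
       (∀ q : Polynomial L, q.Monic → Irreducible q →
          q.map (algebraMap L (RatFunc K)) ∣ Phi f →
          ∃ A ∈ P.parts, q.map (algebraMap L (RatFunc K)) = ∏ j ∈ A, F j)) :=
  stmt_15_general f hsep r F hFm hFirr hfact L hL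
end

section
/- For any two intermediate fields L and L' of K(t)/K(f), the partition of their intersection satisfies P_{L ∩ L'} = P_L ∨ P_{L'}, where P ∨ Q denotes the join of partitions, i.e., the finest partition of {1, …, r} that is refined by both P and Q. -/
open Polynomial

/-- `P` refines `Q`: every part of `P` is contained in some part of `Q`. -/
def Refines {r : ℕ} (P Q : Finpartition (Finset.univ : Finset (Fin r))) : Prop :=
  ∀ A ∈ P.parts, ∃ B ∈ Q.parts, A ⊆ B

/-- `P` is the partition of the intermediate field `L`: all its products lie in `L[x]`
and its number of parts is maximal with this property. -/
def IsPartitionOf {K : Type*} [Field K] {r : ℕ} (F : Fin r → Polynomial (RatFunc K))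
    (L : Set (RatFunc K)) (P : Finpartition (Finset.univ : Finset (Fin r))) : Prop :=
  ProdsIn F L P ∧
    ∀ Q : Finpartition (Finset.univ : Finset (Fin r)),
      ProdsIn F L Q → Q.parts.card ≤ P.parts.card

/-!
Separability of `Φ_f` makes the `F_j` pairwise coprime, so for two parts `A`, `B` the product
over `A ∩ B` is the monic gcd of the products over `A` and `B`. Gcds of polynomials with
coefficients in a subfield `L` keep their coefficients in `L`, hence the partitions whose
products lie in `L[x]` are closed under meets (and, trivially, under coarsening). So `P_L`, having
the most parts, is the finest of them, and the partitions admissible for `L ∩ L'` are exactly those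
coarser than both `P_L` and `P_{L'}`; the finest of these is the join.
-/

theorem Finpartition.eq_of_le_of_card_le_s16 {α : Type*} [DecidableEq α] {s : Finset α}
    {M P : Finpartition s} (h : M ≤ P) (hc : M.parts.card ≤ P.parts.card) : M = P := by
  choose f hfM hfle using fun c (hc : c ∈ P.parts) => Finpartition.exists_le_of_le h hc
  have hinj : ∀ c c' hc hc', f c hc = f c' hc' → c = c' := by
    intro c c' hc hc' hcc'
    obtain ⟨x, hx⟩ := M.nonempty_of_mem_parts (hfM c hc)
    exact P.eq_of_mem_parts hc hc' (hfle c hc hx) (hfle c' hc' (hcc' ▸ hx))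
  have hsurj := Finset.surj_on_of_inj_on_of_card_le f hfM hinj hc
  have hsub : M.parts ⊆ P.parts := by
    intro b hb
    obtain ⟨c, hc, rfl⟩ := hsurj b hb
    suffices c ⊆ f c hc by rwa [(hfle c hc).antisymm this]
    intro x hx
    obtain ⟨c', hc', hxc'⟩ := hsurj (M.part x) (M.part_mem.2 (P.le hc hx))
    have hx' : x ∈ f c' hc' := hxc' ▸ M.mem_part (P.le hc hx)
    obtain rfl := P.eq_of_mem_parts hc hc' hx (hfle c' hc' hx')
    exact hx'
  ext b
  rw [Finset.eq_of_subset_of_card_le hsub (Finpartition.card_mono h)]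

namespace Polynomial

variable {k E : Type*} [Field k] [Field E] (φ : k →+* E)

theorem gcd_mem_lifts [DecidableEq E] {p q : E[X]} (hp : p ∈ lifts φ) (hq : q ∈ lifts φ) :
    EuclideanDomain.gcd p q ∈ lifts φ := by
  classical
  obtain ⟨p, rfl⟩ := (mem_lifts _).1 hp
  obtain ⟨q, rfl⟩ := (mem_lifts _).1 hq
  exact (mem_lifts _).2 ⟨EuclideanDomain.gcd p q, (gcd_map φ).symm⟩

theorem Monic.mem_lifts_of_associated {g d : E[X]} (hg : g.Monic) (hgd : Associated g d)
    (hd : d ∈ lifts φ) : g ∈ lifts φ := by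
  obtain ⟨u, rfl⟩ := hgd
  obtain ⟨c, hc, hcu⟩ := Polynomial.isUnit_iff.1 u.isUnit
  rw [← hcu] at hd
  obtain ⟨a, ha⟩ : c ∈ Set.range φ := by
    simpa [hg.leadingCoeff] using (lifts_iff_coeff_lifts _).1 hd (g * C c).natDegree
  have hCinv : C c⁻¹ ∈ lifts φ := (mem_lifts _).2 ⟨C a⁻¹, by simp [ha]⟩
  simpa [mul_assoc, ← C_mul, hc.ne_zero] using mul_mem hd hCinv

theorem pairwise_isCoprime_of_separable_prod {R ι : Type*} [CommRing R] [Fintype ι]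
    {F : ι → R[X]} (h : (∏ j, F j).Separable) : Pairwise (Function.onFun IsCoprime F) := by
  classical
  intro i j hij
  refine (h.of_dvd ?_).isCoprime
  rw [← Finset.prod_pair hij]
  exact Finset.prod_dvd_prod_of_subset _ _ F (Finset.subset_univ _)

end Polynomial

theorem Subfield.mem_lifts_subtype_iff {E : Type*} [Field E] (L : Subfield E)
    (p : Polynomial E) : p ∈ Polynomial.lifts L.subtype ↔ ∀ n, p.coeff n ∈ L := by
  simp [Polynomial.lifts_iff_coeff_lifts]

theorem Finset.prod_inter_associated_gcd {R ι : Type*} [EuclideanDomain R] [DecidableEq R]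
    [DecidableEq ι] {F : ι → R} (hF : Pairwise (Function.onFun IsCoprime F)) (s t : Finset ι) :
    Associated (∏ j ∈ s ∩ t, F j) (EuclideanDomain.gcd (∏ j ∈ s, F j) (∏ j ∈ t, F j)) := by
  set d := EuclideanDomain.gcd (∏ j ∈ s, F j) (∏ j ∈ t, F j)
  have hcop : IsCoprime (∏ j ∈ s \ t, F j) d := by
    refine IsCoprime.of_isCoprime_of_dvd_right ?_ (EuclideanDomain.gcd_dvd_right _ _)
    exact IsCoprime.prod_left fun i hi => IsCoprime.prod_right fun j hj =>
      hF fun hij => (Finset.mem_sdiff.1 hi).2 (hij ▸ hj)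
  refine associated_of_dvd_dvd ?_ ?_
  · exact EuclideanDomain.dvd_gcd (Finset.prod_dvd_prod_of_subset _ _ F Finset.inter_subset_left)
      (Finset.prod_dvd_prod_of_subset _ _ F Finset.inter_subset_right)
  · refine hcop.symm.dvd_of_dvd_mul_right ?_
    rw [Finset.prod_inter_mul_prod_sdiff]
    exact EuclideanDomain.gcd_dvd_left _ _

section ProdsIn

variable {K : Type*} [Field K] {r : ℕ} {F : Fin r → Polynomial (RatFunc K)}
  {P Q : Finpartition (Finset.univ : Finset (Fin r))}

theorem prodsIn_iff_mem_lifts (L : Subfield (RatFunc K)) :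
    ProdsIn F L P ↔ ∀ A ∈ P.parts, ∏ j ∈ A, F j ∈ Polynomial.lifts L.subtype := by
  simp only [ProdsIn, Subfield.mem_lifts_subtype_iff, SetLike.mem_coe]

theorem prodsIn_inter {S T : Set (RatFunc K)} :
    ProdsIn F (S ∩ T) P ↔ ProdsIn F S P ∧ ProdsIn F T P := by
  simp only [ProdsIn, Set.mem_inter_iff]
  exact ⟨fun h => ⟨fun A hA m => (h A hA m).1, fun A hA m => (h A hA m).2⟩,
    fun h A hA m => ⟨h.1 A hA m, h.2 A hA m⟩⟩

theorem ProdsIn.mono {L : Subfield (RatFunc K)} (hPQ : P ≤ Q) (hP : ProdsIn F L P) :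
    ProdsIn F L Q := by
  rw [prodsIn_iff_mem_lifts] at hP ⊢
  intro B hB
  have hmaps : ∀ j ∈ B, P.part j ∈ P.parts.filter (· ⊆ B) := by
    intro j hj
    have hj' := P.mem_part (Finset.mem_univ j)
    obtain ⟨B', hB', hjB'⟩ := hPQ (P.part_mem.2 (Finset.mem_univ j))
    obtain rfl := Q.eq_of_mem_parts hB' hB (hjB' hj') hj
    exact Finset.mem_filter.2 ⟨P.part_mem.2 (Finset.mem_univ j), hjB'⟩
  rw [← Finset.prod_fiberwise_of_maps_to hmaps]
  refine prod_mem fun A hA => ?_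
  obtain ⟨hAP, hAB⟩ := Finset.mem_filter.1 hA
  have hfiber : B.filter (fun j => P.part j = A) = A := by
    ext j
    rw [Finset.mem_filter, P.part_eq_iff_mem hAP]
    exact ⟨And.right, fun hj => ⟨hAB hj, hj⟩⟩
  rw [hfiber]
  exact hP A hAP

theorem ProdsIn.inf {L : Subfield (RatFunc K)} (hFm : ∀ j, (F j).Monic)
    (hF : Pairwise (Function.onFun IsCoprime F)) (hP : ProdsIn F L P) (hQ : ProdsIn F L Q) :
    ProdsIn F L (P ⊓ Q) := by
  classical
  rw [prodsIn_iff_mem_lifts] at hP hQ ⊢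
  intro A hA
  rw [Finpartition.parts_inf] at hA
  obtain ⟨⟨b, c⟩, hbc, rfl⟩ := Finset.mem_image.1 (Finset.mem_of_mem_erase hA)
  rw [Finset.mem_product] at hbc
  exact (Polynomial.monic_prod_of_monic _ _ fun j _ => hFm j).mem_lifts_of_associated _
    (Finset.prod_inter_associated_gcd hF b c)
    (Polynomial.gcd_mem_lifts _ (hP b hbc.1) (hQ c hbc.2))

theorem IsPartitionOf.le {L : Subfield (RatFunc K)} (hFm : ∀ j, (F j).Monic)
    (hF : Pairwise (Function.onFun IsCoprime F)) (hP : IsPartitionOf F L P)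
    (hQ : ProdsIn F L Q) : P ≤ Q := by
  have hPQ : P ⊓ Q = P :=
    Finpartition.eq_of_le_of_card_le_s16 inf_le_left (hP.2 _ (hP.1.inf hFm hF hQ))
  exact hPQ ▸ inf_le_right

end ProdsIn

theorem stmt_16_general {K : Type*} [Field K] (f : RatFunc K)
    (hsep : (Phi f).Separable)
    (r : ℕ) (F : Fin r → Polynomial (RatFunc K))
    (hFm : ∀ j, (F j).Monic)
    (hfact : Phi f = ∏ j, F j)
    (L L' : IntermediateField K (RatFunc K))
    (PL PL' PI : Finpartition (Finset.univ : Finset (Fin r)))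
    (hPL : IsPartitionOf F (L : Set (RatFunc K)) PL)
    (hPL' : IsPartitionOf F (L' : Set (RatFunc K)) PL')
    (hPI : IsPartitionOf F ((L ⊓ L' : IntermediateField K (RatFunc K)) : Set (RatFunc K)) PI) :
    Refines PL PI ∧ Refines PL' PI ∧
      ∀ R : Finpartition (Finset.univ : Finset (Fin r)),
        Refines PL R → Refines PL' R → Refines PI R := by
  have hF := Polynomial.pairwise_isCoprime_of_separable_prod (hfact ▸ hsep)
  obtain ⟨hPIL, hPIL'⟩ := prodsIn_inter.1 hPI.1
  refine ⟨hPL.le (L := L.toSubfield) hFm hF hPIL, hPL'.le (L := L'.toSubfield) hFm hF hPIL', ?_⟩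
  intro R hR hR'
  refine hPI.le (L := (L ⊓ L').toSubfield) hFm hF (prodsIn_inter.2 ⟨?_, ?_⟩)
  · exact hPL.1.mono (L := L.toSubfield) hR
  · exact hPL'.1.mono (L := L'.toSubfield) hR'

/-- For intermediate fields `L, L'` of `K(t)/K(f)`, the partition of `L ∩ L'` is the
join `P_L ∨ P_{L'}`: the finest partition of `{1,…,r}` refined by both `P_L` and
`P_{L'}`. -/
theorem stmt_16 {K : Type*} [Field K] (f : RatFunc K) (hf : Nonconst f)
    (hmonic : (Phi f).Monic) (hsep : (Phi f).Separable)
    (r : ℕ) (hr : 0 < r) (F : Fin r → Polynomial (RatFunc K))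
    (hFm : ∀ j, (F j).Monic) (hFirr : ∀ j, Irreducible (F j))
    (hfact : Phi f = ∏ j, F j)
    (hF1 : F ⟨0, hr⟩ = Polynomial.X - Polynomial.C RatFunc.X)
    (L L' : IntermediateField K (RatFunc K))
    (hL : IntermediateField.adjoin K {f} ≤ L) (hL' : IntermediateField.adjoin K {f} ≤ L')
    (PL PL' PI : Finpartition (Finset.univ : Finset (Fin r)))
    (hPL : IsPartitionOf F (L : Set (RatFunc K)) PL)
    (hPL' : IsPartitionOf F (L' : Set (RatFunc K)) PL')
    (hPI : IsPartitionOf F ((L ⊓ L' : IntermediateField K (RatFunc K)) : Set (RatFunc K)) PI) :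
    Refines PL PI ∧ Refines PL' PI ∧
      ∀ R : Finpartition (Finset.univ : Finset (Fin r)),
        Refines PL R → Refines PL' R → Refines PI R :=
  stmt_16_general f hsep r F hFm hfact L L' PL PL' PI hPL hPL' hPI
end

section
/- Let L be an intermediate field of K(t)/K(f) with partition P_L = {P^{(1)}, …, P^{(s)}}, numbered so that 1 ∈ P^{(1)} (recall F_1 = x − t). Then the P_L-product g := ∏_{j∈P^{(1)}} F_j ∈ L[x] is the minimal polynomial of t over L. -/
/-!
The part `A` of `P_L` containing the index of `x - t` has its product `g` in `L[x]`, and `t` is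
a root of `g`, so the minimal polynomial `μ` of `t` over `L` divides `g`. Since `g` is a product
of monic irreducibles, `μ = ∏_{j ∈ B} F_j` for some nonempty `B ⊆ A`, and
`∏_{j ∈ A \ B} F_j = g /ₘ μ` also lies in `L[x]`. If `B ≠ A`, splitting `A` into `B` and
`A \ B` would give a partition with products in `L[x]` and one more part, contradicting the
maximality of `P_L`.
-/

open Polynomial

open Finset

namespace Finpartition

variable {α : Type*} [GeneralizedBooleanAlgebra α] [DecidableEq α] {a b c : α}

lemma exists_card_parts_eq_add_one_of_lt (P : Finpartition a) (hb : b ∈ P.parts)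
    (hcb : c < b) (hc : c ≠ ⊥) :
    ∃ Q : Finpartition a, #Q.parts = #P.parts + 1 ∧
      ∀ d ∈ Q.parts, d = c ∨ d = b \ c ∨ d ∈ P.parts := by
  have hEb : Disjoint ((P.parts.erase b).sup id) b :=
    (supIndep_iff_disjoint_erase.mp P.supIndep b hb).symm
  have hsup : (P.parts.erase b).sup id ⊔ b \ c ⊔ c = a := by
    rw [sup_assoc, sdiff_sup_cancel hcb.le, sup_comm, ← id_eq b, ← Finset.sup_insert, id_eq,
      insert_erase hb, P.sup_parts]
  let Q := ((P.ofSubset (P.parts.erase_subset b) rfl).extend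
    (sdiff_eq_bot_iff.not.mpr hcb.not_ge) (hEb.mono_right sdiff_le) rfl).extend
    hc (disjoint_sup_left.mpr ⟨hEb.mono_right hcb.le, disjoint_sdiff_self_left⟩) hsup
  refine ⟨Q, ?_, fun d hd ↦ ?_⟩
  · rw [card_extend, card_extend, ofSubset_parts, card_erase_add_one hb]
  · simp only [Q, extend_parts, ofSubset_parts, mem_insert] at hd
    exact hd.imp_right (Or.imp_right (mem_of_mem_erase))

end Finpartition

lemma Polynomial.exists_subset_prod_eq_of_monic_dvd {R ι : Type*} [Field R] [DecidableEq ι]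
    {F : ι → R[X]} (hFm : ∀ i, (F i).Monic) (hFirr : ∀ i, Irreducible (F i))
    {s : Finset ι} {p : R[X]} (hp : p.Monic) (hdvd : p ∣ ∏ i ∈ s, F i) :
    ∃ t ⊆ s, p = ∏ i ∈ t, F i := by
  induction s using Finset.induction_on generalizing p with
  | empty =>
    exact ⟨∅, subset_rfl, hp.eq_one_of_isUnit (isUnit_of_dvd_one (by simpa using hdvd))⟩
  | @insert a s ha ih =>
    rw [prod_insert ha] at hdvd
    by_cases hap : F a ∣ p
    · obtain ⟨q, rfl⟩ := hap
      obtain ⟨t, hts, rfl⟩ := ih ((hFm a).of_mul_monic_left hp)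
        ((mul_dvd_mul_iff_left (hFm a).ne_zero).mp hdvd)
      exact ⟨insert a t, insert_subset_insert a hts, (prod_insert fun h ↦ ha (hts h)).symm⟩
    · obtain ⟨t, hts, rfl⟩ :=
        ih hp (((hFirr a).coprime_iff_not_dvd.mpr hap).symm.dvd_of_dvd_mul_left hdvd)
      exact ⟨t, hts.trans (subset_insert a s), rfl⟩

namespace IntermediateField

variable {K E : Type*} [Field K] [Field E] [Algebra K E] {L : IntermediateField K E}

lemma coeff_map_mem (q : L[X]) (m : ℕ) : (q.map (algebraMap L E)).coeff m ∈ L := by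
  rw [coeff_map]
  exact SetLike.coe_mem _

lemma exists_monic_map_eq_of_coeff_mem {p : E[X]} (hp : p.Monic) (hpL : ∀ m, p.coeff m ∈ L) :
    ∃ q : L[X], q.Monic ∧ q.map (algebraMap L E) = p := by
  have hlifts : p ∈ lifts (algebraMap L E) :=
    (lifts_iff_coeff_lifts p).mpr fun m ↦ ⟨⟨_, hpL m⟩, rfl⟩
  obtain ⟨q, hq, -, hqm⟩ := lifts_and_degree_eq_and_monic hlifts hp
  exact ⟨q, hqm, hq⟩

lemma coeff_divByMonic_mem {p q : E[X]} (hq : q.Monic) (hpL : ∀ m, p.coeff m ∈ L)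
    (hqL : ∀ m, q.coeff m ∈ L) (m : ℕ) : (p /ₘ q).coeff m ∈ L := by
  obtain ⟨p', hp'⟩ : p ∈ lifts (algebraMap L E) :=
    (lifts_iff_coeff_lifts p).mpr fun m ↦ ⟨⟨_, hpL m⟩, rfl⟩
  obtain ⟨q', hq'm, rfl⟩ := exists_monic_map_eq_of_coeff_mem hq hqL
  rw [← hp', coe_mapRingHom, ← map_divByMonic _ hq'm]
  exact coeff_map_mem _ m

lemma exists_subset_map_minpoly_eq_prod {ι : Type*} [DecidableEq ι] {F : ι → E[X]}
    (hFm : ∀ i, (F i).Monic) (hFirr : ∀ i, Irreducible (F i)) {A : Finset ι}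
    (hAL : ∀ m, (∏ i ∈ A, F i).coeff m ∈ L) {x : E} (hx : (∏ i ∈ A, F i).eval x = 0) :
    ∃ B ⊆ A, B.Nonempty ∧ (minpoly L x).map (algebraMap L E) = ∏ i ∈ B, F i := by
  obtain ⟨g, hgm, hg⟩ :=
    exists_monic_map_eq_of_coeff_mem (monic_prod_of_monic _ _ fun i _ ↦ hFm i) hAL
  have hgx : aeval x g = 0 := by rwa [aeval_def, ← eval_map, hg]
  have hint : IsIntegral L x := ⟨g, hgm, hgx⟩
  obtain ⟨B, hBA, hB⟩ := exists_subset_prod_eq_of_monic_dvd hFm hFirr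
    ((minpoly.monic hint).map _) (hg ▸ Polynomial.map_dvd _ (minpoly.dvd L x hgx))
  refine ⟨B, hBA, nonempty_iff_ne_empty.mpr fun hB0 ↦ ?_, hB⟩
  have := congrArg natDegree hB
  rw [hB0, prod_empty, natDegree_one, natDegree_map] at this
  exact (minpoly.natDegree_pos hint).ne' this

end IntermediateField

theorem stmt_17_general {K : Type*} [Field K]
    (r : ℕ) (hr : 0 < r) (F : Fin r → Polynomial (RatFunc K))
    (hFm : ∀ j, (F j).Monic) (hFirr : ∀ j, Irreducible (F j))
    (hF1 : F ⟨0, hr⟩ = Polynomial.X - Polynomial.C RatFunc.X)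
    (L : IntermediateField K (RatFunc K))
    (P : Finpartition (Finset.univ : Finset (Fin r)))
    (hP : IsPartitionOf F (L : Set (RatFunc K)) P)
    (A : Finset (Fin r)) (hA : A ∈ P.parts) (h1 : (⟨0, hr⟩ : Fin r) ∈ A) :
    (minpoly L (RatFunc.X : RatFunc K)).map (algebraMap L (RatFunc K)) = ∏ j ∈ A, F j := by
  classical
  have hroot : (∏ j ∈ A, F j).eval RatFunc.X = 0 := by
    rw [eval_prod]
    exact prod_eq_zero h1 (by simp [hF1])
  obtain ⟨B, hBA, hB, hmin⟩ :=
    IntermediateField.exists_subset_map_minpoly_eq_prod hFm hFirr (hP.1 A hA) hroot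
  rw [hmin]
  obtain rfl | hBA := hBA.eq_or_ssubset
  · rfl
  have hBm : (∏ j ∈ B, F j).Monic := monic_prod_of_monic _ _ fun j _ ↦ hFm j
  obtain ⟨Q, hQcard, hQparts⟩ := P.exists_card_parts_eq_add_one_of_lt hA hBA hB.ne_empty
  have hcompl : ∏ j ∈ A \ B, F j = (∏ j ∈ A, F j) /ₘ ∏ j ∈ B, F j := by
    rw [← prod_sdiff hBA.subset, mul_comm, mul_divByMonic_cancel_left _ hBm]
  have hQ : ProdsIn F (L : Set (RatFunc K)) Q := by
    intro C hC
    obtain rfl | rfl | hC := hQparts C hC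
    · exact hmin ▸ IntermediateField.coeff_map_mem _
    · rw [hcompl]
      exact IntermediateField.coeff_divByMonic_mem hBm (hP.1 A hA)
        (hmin ▸ IntermediateField.coeff_map_mem _)
    · exact hP.1 C hC
  have := hP.2 Q hQ
  omega

/-- Let `L` be an intermediate field of `K(t)/K(f)` with partition `P_L`, and let
`A` be the part of `P_L` containing the index `1` (of `F_1 = x − t`).  Then the
`P_L`-product `g := ∏_{j ∈ A} F_j ∈ L[x]` is the minimal polynomial of `t` over `L`. -/
theorem stmt_17 {K : Type*} [Field K] (f : RatFunc K) (hf : Nonconst f)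
    (hmonic : (Phi f).Monic) (hsep : (Phi f).Separable)
    (r : ℕ) (hr : 0 < r) (F : Fin r → Polynomial (RatFunc K))
    (hFm : ∀ j, (F j).Monic) (hFirr : ∀ j, Irreducible (F j))
    (hfact : Phi f = ∏ j, F j)
    (hF1 : F ⟨0, hr⟩ = Polynomial.X - Polynomial.C RatFunc.X)
    (L : IntermediateField K (RatFunc K)) (hL : IntermediateField.adjoin K {f} ≤ L)
    (P : Finpartition (Finset.univ : Finset (Fin r)))
    (hP : IsPartitionOf F (L : Set (RatFunc K)) P)
    (A : Finset (Fin r)) (hA : A ∈ P.parts) (h1 : (⟨0, hr⟩ : Fin r) ∈ A) :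
    (minpoly L (RatFunc.X : RatFunc K)).map (algebraMap L (RatFunc K)) = ∏ j ∈ A, F j :=
  stmt_17_general r hr F hFm hFirr hF1 L P hP A hA h1
end

section
/- Let L be an intermediate field of K(t)/K(f) with partition P_L = {P^{(1)}, …, P^{(s)}}, numbered so that 1 ∈ P^{(1)}, and let g := ∏_{i∈P^{(1)}} F_i ∈ L[x]. If c ∈ K(t) is any coefficient of g not lying in K, then L = K(c). -/
open Polynomial

section Aux

variable {K : Type*} [Field K]

/-- Swap the two variables of a bivariate polynomial. -/
noncomputable def bswap {R : Type*} [CommSemiring R] :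
    Polynomial (Polynomial R) →+* Polynomial (Polynomial R) :=
  eval₂RingHom (mapRingHom (C : R →+* Polynomial R)) (C X)

lemma bswap_C {R : Type*} [CommSemiring R] (a : Polynomial R) :
    bswap (C a) = a.map C := eval₂_C _ _

lemma bswap_X {R : Type*} [CommSemiring R] :
    bswap (X : Polynomial (Polynomial R)) = C X := eval₂_X _ _

lemma bswap_map_C {R : Type*} [CommSemiring R] (p : Polynomial R) :
    bswap (p.map C) = C p := by
  rw [bswap, coe_eval₂RingHom, eval₂_map]
  have : eval₂ ((mapRingHom (C : R →+* Polynomial R)).comp C) (C X) p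
      = C (eval₂ (C : R →+* Polynomial R) X p) := by
    rw [hom_eval₂]
    apply eval₂_congr _ rfl rfl
    ext k
    simp
  rw [this, eval₂_C_X]

lemma bswap_bswap {R : Type*} [CommSemiring R] (U : Polynomial (Polynomial R)) :
    bswap (bswap U) = U := by
  have h : (bswap.comp bswap : Polynomial (Polynomial R) →+* _) = RingHom.id _ := by
    apply ringHom_ext'
    · apply ringHom_ext
      · intro a
        simp [bswap_C, bswap_map_C]
      · simp [bswap_C, bswap_map_C, bswap_X]
    · simp [bswap_X, bswap_C]
  exact RingHom.congr_fun h U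

lemma bswap_injective {R : Type*} [CommSemiring R] :
    Function.Injective (bswap (R := R)) :=
  Function.LeftInverse.injective bswap_bswap

lemma bswap_coeff_coeff {R : Type*} [CommSemiring R] (U : Polynomial (Polynomial R)) (i j : ℕ) :
    ((bswap U).coeff j).coeff i = (U.coeff i).coeff j := by
  induction U using Polynomial.induction_on' with
  | add p q hp hq => simp [hp, hq]
  | monomial n a =>
    rw [← C_mul_X_pow_eq_monomial, map_mul, map_pow, bswap_C, bswap_X, ← map_pow, coeff_mul_C,
      coeff_map, coeff_C_mul]
    simp only [coeff_C_mul, coeff_X_pow, coeff_mul_C]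
    by_cases h : i = n <;> simp [h, mul_comm]

lemma lift_poly {F E : Type*} [Field F] [Field E] [Algebra F E] (L : IntermediateField F E)
    (P : Polynomial E) (h : ∀ i, P.coeff i ∈ L) :
    ∃ P' : Polynomial L, P'.map (algebraMap L E) = P := by
  have : P ∈ Polynomial.lifts (algebraMap L E) := by
    rw [lifts_iff_coeff_lifts]
    intro n
    exact ⟨⟨P.coeff n, h n⟩, rfl⟩
  exact (Polynomial.mem_lifts _).mp this

lemma adjoin_X_eq_top (E : IntermediateField K (RatFunc K)) :
    IntermediateField.adjoin (↥E) ({RatFunc.X} : Set (RatFunc K)) = ⊤ := by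
  rw [eq_top_iff]
  rintro x -
  set S := IntermediateField.adjoin (↥E) ({RatFunc.X} : Set (RatFunc K)) with hS
  have hX : RatFunc.X ∈ S := IntermediateField.subset_adjoin _ _ rfl
  have halg : ∀ p : Polynomial K, algebraMap (Polynomial K) (RatFunc K) p ∈ S := by
    intro p
    induction p using Polynomial.induction_on with
    | C a =>
      have h1 : algebraMap K (RatFunc K) a ∈ E := E.algebraMap_mem a
      have h2 : algebraMap E (RatFunc K) ⟨_, h1⟩ ∈ S := S.algebraMap_mem _
      simpa using h2
    | add p q hp hq => rw [map_add]; exact S.add_mem hp hq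
    | monomial n a hm =>
      rw [pow_succ, ← mul_assoc, map_mul]
      exact S.mul_mem hm (by rw [RatFunc.algebraMap_X]; exact hX)
  rw [← RatFunc.num_div_denom x]
  exact S.div_mem (halg _) (halg _)

lemma fd_of_integral (E : IntermediateField K (RatFunc K))
    (hint : IsIntegral E (RatFunc.X : RatFunc K)) : FiniteDimensional E (RatFunc K) := by
  have h1 : FiniteDimensional E (IntermediateField.adjoin (↥E) ({RatFunc.X} : Set (RatFunc K))) :=
    IntermediateField.adjoin.finiteDimensional hint
  rw [adjoin_X_eq_top] at h1
  exact (IntermediateField.topEquiv (F := (↥E)) (E := RatFunc K)).toLinearEquiv.finiteDimensional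

lemma finrank_eq_minpoly_natDegree (E : IntermediateField K (RatFunc K))
    (hint : IsIntegral E (RatFunc.X : RatFunc K)) :
    Module.finrank E (RatFunc K) = (minpoly E (RatFunc.X : RatFunc K)).natDegree := by
  have h1 := IntermediateField.adjoin.finrank hint
  rw [← h1]
  have h2 := adjoin_X_eq_top E
  rw [h2]
  exact ((IntermediateField.topEquiv (F := (↥E)) (E := RatFunc K)).toLinearEquiv.finrank_eq).symm

lemma eval_X_map (p : Polynomial K) :
    Polynomial.eval (RatFunc.X) (p.map (algebraMap K (RatFunc K)))
      = algebraMap (Polynomial K) (RatFunc K) p := by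
  rw [eval_map]
  induction p using Polynomial.induction_on with
  | C a => simp
  | add p q hp hq => rw [eval₂_add, hp, hq, map_add]
  | monomial n a hm =>
    rw [pow_succ, ← mul_assoc, eval₂_mul, map_mul, eval₂_X, RatFunc.algebraMap_X, hm]

lemma num_eq_c_mul_denom (c : RatFunc K) :
    algebraMap (Polynomial K) (RatFunc K) c.num
      = c * algebraMap (Polynomial K) (RatFunc K) c.denom := by
  have hd : algebraMap (Polynomial K) (RatFunc K) c.denom ≠ 0 :=
    RatFunc.algebraMap_ne_zero c.denom_ne_zero
  exact (div_eq_iff hd).mp (RatFunc.num_div_denom c)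

lemma nonconst_ne_zero {c : RatFunc K} (hc : Nonconst c) : c ≠ 0 := by
  intro h
  exact hc 0 (by simp [h])

lemma coeff_Phi (c : RatFunc K) (i : ℕ) :
    (Phi c).coeff i = RatFunc.C (c.num.coeff i) - c * RatFunc.C (c.denom.coeff i) := by
  simp [Phi, coeff_map, RatFunc.algebraMap_eq_C]

lemma Phi_coeff_max_ne_zero (c : RatFunc K) (hcK : Nonconst c) :
    (Phi c).coeff (max c.num.natDegree c.denom.natDegree) ≠ 0 := by
  set n := max c.num.natDegree c.denom.natDegree with hn
  rw [coeff_Phi]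
  by_cases hq : c.denom.coeff n = 0
  · have hpn : c.num.coeff n ≠ 0 := by
      have hnum : n = c.num.natDegree := by
        rcases max_cases c.num.natDegree c.denom.natDegree with ⟨h1, _⟩ | ⟨h1, _⟩
        · exact h1.symm ▸ rfl
        · exfalso
          apply c.denom_ne_zero
          rw [← leadingCoeff_eq_zero, leadingCoeff]
          rw [hn, h1] at hq
          exact hq
      rw [hnum]
      intro hz
      apply nonconst_ne_zero hcK
      have : c.num = 0 := leadingCoeff_eq_zero.mp hz
      rw [← RatFunc.num_div_denom c, this]
      simp
    rw [hq]
    simp only [map_zero, mul_zero, sub_zero]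
    intro hz
    exact hpn (by simpa using hz)
  · intro hz
    rw [sub_eq_zero] at hz
    apply hcK (c.num.coeff n * (c.denom.coeff n)⁻¹)
    have hCq : (RatFunc.C (c.denom.coeff n)) ≠ 0 := by
      intro hz2
      exact hq (by simpa using hz2)
    field_simp [map_mul, map_inv₀]
    rw [map_div₀, hz, mul_div_cancel_right₀ _ hCq]

lemma natDegree_Phi (c : RatFunc K) (hcK : Nonconst c) :
    (Phi c).natDegree = max c.num.natDegree c.denom.natDegree := by
  apply le_antisymm
  · rw [natDegree_le_iff_coeff_eq_zero]
    intro i hi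
    rw [coeff_Phi, coeff_eq_zero_of_natDegree_lt (lt_of_le_of_lt (le_max_left _ _) hi),
      coeff_eq_zero_of_natDegree_lt (lt_of_le_of_lt (le_max_right _ _) hi)]
    simp
  · exact le_natDegree_of_ne_zero (Phi_coeff_max_ne_zero c hcK)

lemma Phi_ne_zero (c : RatFunc K) (hcK : Nonconst c) : Phi c ≠ 0 := by
  intro h
  exact Phi_coeff_max_ne_zero c hcK (by rw [h]; simp)

lemma eval_X_Phi (c : RatFunc K) : Polynomial.eval (RatFunc.X) (Phi c) = 0 := by
  rw [Phi]
  simp only [eval_sub, eval_mul, eval_C, eval_X_map]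
  rw [num_eq_c_mul_denom]
  ring

/-- The crux inequality: the "height" of any nonconstant coefficient of a monic
divisor of `Phi c` (where the coefficient equals `c`) is at most the degree. -/
lemma crux (c : RatFunc K) (hcK : Nonconst c) (g : Polynomial (RatFunc K)) (hg : g.Monic)
    (hdvd : g ∣ Phi c) (m₀ : ℕ) (hm₀ : g.coeff m₀ = c) :
    max c.num.natDegree c.denom.natDegree ≤ g.natDegree := by
  classical
  letI : DecidableEq K := Classical.decEq K
  letI : NormalizedGCDMonoid (Polynomial K) :=
    UniqueFactorizationMonoid.toNormalizedGCDMonoid _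
  set alg : Polynomial K →+* RatFunc K := algebraMap (Polynomial K) (RatFunc K) with halg
  have halginj : Function.Injective alg := IsFractionRing.injective (Polynomial K) (RatFunc K)
  set p : Polynomial K := c.num with hp
  set q : Polynomial K := c.denom with hq
  set n : ℕ := max p.natDegree q.natDegree with hn
  set m : ℕ := g.natDegree with hm
  have hc0 : c ≠ 0 := nonconst_ne_zero hcK
  have hp0 : p ≠ 0 := RatFunc.num_ne_zero hc0
  have hq0 : q ≠ 0 := c.denom_ne_zero
  have hcop : IsCoprime p q := RatFunc.isCoprime_num_denom c
  have halgq0 : alg q ≠ 0 := RatFunc.algebraMap_ne_zero hq0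
  have hCK : alg.comp (C : K →+* Polynomial K) = algebraMap K (RatFunc K) := by
    rw [halg, ← Polynomial.algebraMap_eq (R := K), ← IsScalarTower.algebraMap_eq]
  -- the bivariate polynomial H
  set H : Polynomial (Polynomial K) := C q * p.map (C : K →+* Polynomial K) - C p * q.map (C : K →+* Polynomial K) with hH
  have hHcoeff : ∀ i, H.coeff i = q * C (p.coeff i) - p * C (q.coeff i) := by
    intro i
    rw [hH, coeff_sub, coeff_C_mul, coeff_C_mul, coeff_map, coeff_map]
  have hmapC : ∀ z : Polynomial K, (z.map (C : K →+* Polynomial K)).map alg = z.map (algebraMap K (RatFunc K)) := by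
    intro z
    rw [Polynomial.map_map, hCK]
  have hHmap : H.map alg = C (alg q) * Phi c := by
    rw [hH, Polynomial.map_sub, Polynomial.map_mul, Polynomial.map_mul, map_C, map_C,
      hmapC, hmapC, Phi]
    have h2 : (C (alg p) : Polynomial (RatFunc K)) = C c * C (alg q) := by
      rw [← map_mul, ← num_eq_c_mul_denom]
    rw [h2]
    ring
  -- degree facts about H
  have hHcoeffmap : ∀ i, alg (H.coeff i) = alg q * (Phi c).coeff i := by
    intro i
    have := congrArg (fun z => Polynomial.coeff z i) hHmap
    simpa [coeff_map, coeff_C_mul] using this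
  have hnPhi : (Phi c).natDegree = n := natDegree_Phi c hcK
  have hHn : H.coeff n ≠ 0 := by
    intro hz
    apply Phi_coeff_max_ne_zero c hcK
    have h2 := hHcoeffmap n
    rw [hz, map_zero] at h2
    rcases mul_eq_zero.mp h2.symm with h3 | h3
    · exact absurd h3 halgq0
    · exact h3
  have hHhigh : ∀ i, n < i → H.coeff i = 0 := by
    intro i hi
    apply halginj
    rw [map_zero, hHcoeffmap i, coeff_eq_zero_of_natDegree_lt (hnPhi ▸ hi), mul_zero]
  have hH0 : H ≠ 0 := fun hz => hHn (by rw [hz]; simp)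
  have hHdeg : H.natDegree = n := by
    apply le_antisymm
    · rw [natDegree_le_iff_coeff_eq_zero]
      exact fun i hi => hHhigh i hi
    · exact le_natDegree_of_ne_zero hHn
  -- clear denominators of g and take the primitive part
  have hg0 : g ≠ 0 := hg.ne_zero
  obtain ⟨b, hb⟩ := IsLocalization.integerNormalization_map_to_map (nonZeroDivisors (Polynomial K)) g
  set G0 : Polynomial (Polynomial K) := IsLocalization.integerNormalization (nonZeroDivisors (Polynomial K)) g with hG0
  have hbne : (b : Polynomial K) ≠ 0 := nonZeroDivisors.coe_ne_zero b
  have halgb0 : alg b ≠ 0 := fun hz => hbne (halginj (by rw [hz, map_zero]))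
  have hG0map : G0.map alg = C (alg b) * g := by
    rw [hG0, hb, Algebra.smul_def]
    congr 1
  have hG00 : G0 ≠ 0 := by
    intro hz
    apply mul_ne_zero (C_ne_zero.mpr halgb0) hg0
    rw [← hG0map, hz, Polynomial.map_zero]
  set Gh : Polynomial (Polynomial K) := G0.primPart with hGh
  have hGhprim : Gh.IsPrimitive := G0.isPrimitive_primPart
  have hGh0 : Gh ≠ 0 := G0.primPart_ne_zero
  have hct0 : G0.content ≠ 0 := fun hz => hG00 (content_eq_zero_iff.mp hz)
  have halgct0 : alg G0.content ≠ 0 := fun hz => hct0 (halginj (by rw [hz, map_zero]))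
  set u : RatFunc K := alg b / alg G0.content with hu
  have hu0 : u ≠ 0 := div_ne_zero halgb0 halgct0
  have hGhmap : Gh.map alg = C u * g := by
    have h2 := congrArg (Polynomial.map alg) (G0.eq_C_content_mul_primPart)
    rw [hG0map, Polynomial.map_mul, map_C] at h2
    apply mul_left_cancel₀ (C_ne_zero.mpr halgct0)
    rw [← h2]
    rw [← mul_assoc, ← map_mul, hu, mul_div_cancel₀ _ halgct0]
  have hGhdeg : Gh.natDegree = m := by
    have h2 : (Gh.map alg).natDegree = Gh.natDegree :=
      natDegree_map_eq_of_injective halginj Gh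
    rw [hGhmap] at h2
    rw [← h2, natDegree_mul (C_ne_zero.mpr hu0) hg0, natDegree_C, zero_add]
  -- Gauss: Gh divides H in R[X]
  have hGhdvdH : Gh ∣ H := by
    have hmapdvd : Gh.map alg ∣ H.map alg := by
      obtain ⟨v, hv⟩ := hdvd
      refine ⟨C (alg q) * C u⁻¹ * v, ?_⟩
      have h9 : (C u : Polynomial (RatFunc K)) * C u⁻¹ = 1 := by
        rw [← map_mul, mul_inv_cancel₀ hu0, map_one]
      calc H.map alg = C (alg q) * (g * v) := by rw [hHmap, hv]
        _ = (C u * C u⁻¹) * (C (alg q) * (g * v)) := by rw [h9, one_mul]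
        _ = (C u * g) * (C (alg q) * C u⁻¹ * v) := by ring
        _ = Gh.map alg * (C (alg q) * C u⁻¹ * v) := by rw [hGhmap]
    have hctH0 : H.content ≠ 0 := fun hz => hH0 (content_eq_zero_iff.mp hz)
    have halgctH0 : alg H.content ≠ 0 := fun hz => hctH0 (halginj (by rw [hz, map_zero]))
    have hmapdvd2 : Gh.map alg ∣ H.primPart.map alg := by
      have h3 := congrArg (Polynomial.map alg) H.eq_C_content_mul_primPart
      rw [Polynomial.map_mul, map_C] at h3
      have h4 : Gh.map alg ∣ C (alg H.content) * H.primPart.map alg := by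
        rw [← h3]; exact hmapdvd
      have h5 := h4.mul_left (C (alg H.content)⁻¹)
      have h6 : (C (alg H.content)⁻¹ : Polynomial (RatFunc K)) * (C (alg H.content) * H.primPart.map alg)
          = H.primPart.map alg := by
        rw [← mul_assoc, ← map_mul, inv_mul_cancel₀ halgctH0, map_one, one_mul]
      rwa [h6] at h5
    exact dvd_trans
      (hGhprim.dvd_of_fraction_map_dvd_fraction_map hmapdvd2)
      H.primPart_dvd
  obtain ⟨W, hW⟩ := hGhdvdH
  have hW0 : W ≠ 0 := by
    intro hz
    exact hH0 (by rw [hW, hz, mul_zero])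
  -- swap variables
  have hbsH : bswap H = -H := by
    rw [hH, map_sub, map_mul, map_mul, bswap_C, bswap_C, bswap_map_C, bswap_map_C]
    ring
  have hbsGh0 : bswap Gh ≠ 0 := by
    intro hz
    exact hGh0 (bswap_injective (by rw [hz, map_zero]))
  have hbsW0 : bswap W ≠ 0 := by
    intro hz
    exact hW0 (bswap_injective (by rw [hz, map_zero]))
  have hdegmul : n = (bswap Gh).natDegree + (bswap W).natDegree := by
    have h2 : bswap H = bswap Gh * bswap W := by rw [hW, map_mul]
    have h3 : (bswap H).natDegree = n := by rw [hbsH, natDegree_neg, hHdeg]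
    rw [← h3, h2, natDegree_mul hbsGh0 hbsW0]
  -- the t-degree of Gh is at least n
  have key : ∀ jj ii : ℕ, (Gh.coeff ii).coeff jj ≠ 0 → jj ≤ (bswap Gh).natDegree := by
    intro jj ii hne
    apply le_natDegree_of_ne_zero (n := jj)
    intro hz
    apply hne
    rw [← bswap_coeff_coeff, hz, coeff_zero]
  set d : Polynomial K := Gh.coeff m with hd
  have halgd : alg d = u := by
    have h2 := congrArg (fun z => Polynomial.coeff z m) hGhmap
    have h3 : g.coeff m = 1 := hg.coeff_natDegree
    simpa [coeff_map, coeff_C_mul, h3] using h2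
  have hd0 : d ≠ 0 := fun hz => hu0 (by rw [← halgd, hz, map_zero])
  set e : Polynomial K := Gh.coeff m₀ with he
  have halge : alg e = u * c := by
    have h2 := congrArg (fun z => Polynomial.coeff z m₀) hGhmap
    simpa [coeff_map, coeff_C_mul, hm₀] using h2
  have heq : e * q = d * p := by
    apply halginj
    rw [map_mul, map_mul, halge, halgd, num_eq_c_mul_denom]
    ring
  have hqd : q ∣ d := by
    apply (hcop.symm).dvd_of_dvd_mul_right
    exact ⟨e, by rw [← heq]; ring⟩
  have hdq : q.natDegree ≤ d.natDegree := natDegree_le_of_dvd hqd hd0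
  have he0 : e ≠ 0 := by
    intro hz
    rw [hz, zero_mul] at heq
    exact hp0 (by rcases mul_eq_zero.mp heq.symm with h3 | h3; exacts [absurd h3 hd0, h3])
  have hdeg_e : e.natDegree + q.natDegree = d.natDegree + p.natDegree := by
    rw [← natDegree_mul he0 hq0, ← natDegree_mul hd0 hp0, heq]
  have hlow : n ≤ (bswap Gh).natDegree := by
    rcases le_or_gt p.natDegree q.natDegree with hpq | hpq
    · have h2 : n = q.natDegree := max_eq_right hpq
      have h3 : (Gh.coeff m).coeff d.natDegree ≠ 0 := by
        rw [← hd]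
        exact leadingCoeff_ne_zero.mpr hd0
      exact h2 ▸ le_trans hdq (key d.natDegree m h3)
    · have h2 : n = p.natDegree := max_eq_left hpq.le
      have h3 : (Gh.coeff m₀).coeff e.natDegree ≠ 0 := by
        rw [← he]
        exact leadingCoeff_ne_zero.mpr he0
      have h4 : p.natDegree ≤ e.natDegree := by omega
      exact h2 ▸ le_trans h4 (key e.natDegree m₀ h3)
  have hbsWdeg : (bswap W).natDegree = 0 := by omega
  set w : Polynomial K := (bswap W).coeff 0 with hw
  have hbsW : bswap W = C w := (eq_C_of_natDegree_eq_zero hbsWdeg)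
  have hWeq : W = w.map (C : K →+* Polynomial K) := by
    rw [← bswap_bswap (U := W), hbsW, bswap_C]
  have hw0 : w ≠ 0 := by
    intro hz
    apply hbsW0
    rw [hbsW, hz, map_zero]
  -- w divides all the coefficients of H
  have hwdvd : ∀ j, w ∣ H.coeff j := by
    intro j
    have h2 : bswap H = bswap Gh * C w := by rw [hW, map_mul, hbsW]
    have h3 : H = (-(bswap Gh)) * C w := by
      have h4 : H = -(bswap H) := by rw [hbsH, neg_neg]
      rw [h4, h2]; ring
    have h4 := congrArg (fun z => Polynomial.coeff z j) h3
    simp only [coeff_mul_C] at h4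
    exact ⟨(-(bswap Gh)).coeff j, by rw [h4]; ring⟩
  -- w is a unit
  have hwunit : IsUnit w := by
    by_cases hcase : ∀ i j : ℕ, p.coeff i * q.coeff j = q.coeff i * p.coeff j
    · exfalso
      set j' : ℕ := q.natDegree with hj'
      have hqj' : q.coeff j' ≠ 0 := leadingCoeff_ne_zero.mpr hq0
      have hpq : p * C (q.coeff j') = q * C (p.coeff j') := by
        ext k
        rw [coeff_mul_C, coeff_mul_C]
        exact hcase k j'
      have h5 := congrArg alg hpq
      rw [map_mul, map_mul] at h5
      have hCq : ∀ a : K, alg (C a) = RatFunc.C a := by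
        intro a
        have := congrArg (fun φ => φ a) hCK
        simpa [RatFunc.algebraMap_eq_C] using this
      rw [hCq, hCq, num_eq_c_mul_denom] at h5
      have h6 : c * RatFunc.C (q.coeff j') = RatFunc.C (p.coeff j') := by
        apply mul_left_cancel₀ halgq0
        calc alg q * (c * RatFunc.C (q.coeff j')) = c * alg q * RatFunc.C (q.coeff j') := by ring
          _ = alg q * RatFunc.C (p.coeff j') := h5
      apply hcK (p.coeff j' * (q.coeff j')⁻¹)
      have hCq0 : (RatFunc.C (q.coeff j') : RatFunc K) ≠ 0 := by
        intro hz
        exact hqj' (by simpa using hz)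
      rw [map_mul, map_inv₀, ← h6]
      field_simp
    · push_neg at hcase
      obtain ⟨i, j, hij⟩ := hcase
      set s : K := p.coeff i * q.coeff j - q.coeff i * p.coeff j with hs
      have hs0 : s ≠ 0 := sub_ne_zero.mpr hij
      have hCs : (C s : Polynomial K) = C (p.coeff i) * C (q.coeff j) - C (q.coeff i) * C (p.coeff j) := by
        rw [hs, map_sub, map_mul, map_mul]
      have h1 : w ∣ q * C s := by
        have h2 : q * C s = C (q.coeff j) * H.coeff i - C (q.coeff i) * H.coeff j := by
          rw [hHcoeff i, hHcoeff j, hCs]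
          ring
        rw [h2]
        exact dvd_sub ((hwdvd i).mul_left _) ((hwdvd j).mul_left _)
      have h2 : w ∣ p * C s := by
        have h3 : p * C s = C (p.coeff j) * H.coeff i - C (p.coeff i) * H.coeff j := by
          rw [hHcoeff i, hHcoeff j, hCs]
          ring
        rw [h3]
        exact dvd_sub ((hwdvd i).mul_left _) ((hwdvd j).mul_left _)
      have hq' : w ∣ q := by
        have h4 := h1.mul_right (C s⁻¹)
        have h5 : q * C s * C s⁻¹ = q := by
          rw [mul_assoc, ← map_mul, mul_inv_cancel₀ hs0, map_one, mul_one]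
        rwa [h5] at h4
      have hp' : w ∣ p := by
        have h4 := h2.mul_right (C s⁻¹)
        have h5 : p * C s * C s⁻¹ = p := by
          rw [mul_assoc, ← map_mul, mul_inv_cancel₀ hs0, map_one, mul_one]
        rwa [h5] at h4
      exact hcop.isUnit_of_dvd' hp' hq'
  -- conclude
  have hwdeg : w.natDegree = 0 := natDegree_eq_zero_of_isUnit hwunit
  have hfin : n = m + w.natDegree := by
    have h2 : H.natDegree = Gh.natDegree + (w.map (C : K →+* Polynomial K)).natDegree := by
      rw [hW, hWeq, natDegree_mul hGh0 (by
        intro hz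
        exact hw0 (by simpa using (Polynomial.map_eq_zero_iff (C_injective)).mp hz))]
    rw [← hHdeg, h2, hGhdeg, natDegree_map_eq_of_injective C_injective]
  omega

end Aux

/-- Let `L` be an intermediate field of `K(t)/K(f)` with partition `P_L`, let `A` be
the part of `P_L` containing the index `1` (of `F_1 = x − t`), and let
`g := ∏_{j ∈ A} F_j ∈ L[x]`.  If `c` is any coefficient of `g` not lying in `K`,
then `L = K(c)`. -/
theorem stmt_18 {K : Type*} [Field K] (f : RatFunc K) (hf : Nonconst f)
    (hmonic : (Phi f).Monic) (hsep : (Phi f).Separable)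
    (r : ℕ) (hr : 0 < r) (F : Fin r → Polynomial (RatFunc K))
    (hFm : ∀ j, (F j).Monic) (hFirr : ∀ j, Irreducible (F j))
    (hfact : Phi f = ∏ j, F j)
    (hF1 : F ⟨0, hr⟩ = Polynomial.X - Polynomial.C RatFunc.X)
    (L : IntermediateField K (RatFunc K)) (hL : IntermediateField.adjoin K {f} ≤ L)
    (P : Finpartition (Finset.univ : Finset (Fin r)))
    (hP : IsPartitionOf F (L : Set (RatFunc K)) P)
    (A : Finset (Fin r)) (hA : A ∈ P.parts) (h1 : (⟨0, hr⟩ : Fin r) ∈ A)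
    (c : RatFunc K) (hc : ∃ m, (∏ j ∈ A, F j).coeff m = c)
    (hcK : Nonconst c) :
    L = IntermediateField.adjoin K {c} := by
  classical
  obtain ⟨m₀, hm₀⟩ := hc
  set t : RatFunc K := RatFunc.X with ht
  set j0 : Fin r := ⟨0, hr⟩ with hj0
  set g : Polynomial (RatFunc K) := ∏ j ∈ A, F j with hg
  -- basic facts
  have hginj : Function.Injective (algebraMap (↥L) (RatFunc K)) := (algebraMap (↥L) (RatFunc K)).injective
  have hgmonic : g.Monic := monic_prod_of_monic _ _ fun j _ => hFm j
  have hfL : f ∈ L := hL (IntermediateField.mem_adjoin_simple_self K f)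
  -- t is a root of g
  have hF1g : F j0 ∣ g := Finset.dvd_prod_of_mem _ h1
  have hevalg : Polynomial.eval t g = 0 := by
    obtain ⟨w, hw⟩ := hF1g
    rw [hw, eval_mul, hF1]
    simp
  -- Φ_f basics
  have hΦfcoeff : ∀ i, (Phi f).coeff i ∈ L := by
    intro i
    rw [coeff_Phi]
    refine sub_mem ?_ (mul_mem hfL ?_) <;>
      · rw [← RatFunc.algebraMap_eq_C]; exact L.algebraMap_mem _
  obtain ⟨Φf', hΦf'⟩ := lift_poly L (Phi f) hΦfcoeff
  have haevalΦf : (Polynomial.aeval t) Φf' = 0 := by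
    rw [aeval_def, ← eval_map, hΦf', eval_X_Phi]
  have hΦf'ne : Φf' ≠ 0 := by
    intro h
    apply hmonic.ne_zero
    rw [← hΦf', h, Polynomial.map_zero]
  -- t is integral over L
  have hintL : IsIntegral L t := IsAlgebraic.isIntegral ⟨Φf', hΦf'ne, haevalΦf⟩
  set h : Polynomial (↥L) := minpoly (↥L) t with hh
  set hK : Polynomial (RatFunc K) := h.map (algebraMap (↥L) (RatFunc K)) with hhK
  have hKmonic : hK.Monic := (minpoly.monic hintL).map _
  -- key step: hK = g  (via maximality of the partition)
  have hΦsf : Squarefree (Phi f) := hsep.squarefree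
  have hFinj : Function.Injective F := by
    intro i j hij
    by_contra hne
    apply (hFirr i).not_isUnit
    apply hΦsf (F i)
    rw [hfact, ← Finset.mul_prod_erase _ _ (Finset.mem_univ i)]
    have hj' : j ∈ Finset.univ.erase i := Finset.mem_erase.mpr ⟨fun hh => hne hh.symm, Finset.mem_univ j⟩
    rw [← Finset.mul_prod_erase _ _ hj', ← hij, ← mul_assoc]
    exact Dvd.intro _ rfl
  have hFnd : ∀ i j : Fin r, i ≠ j → ¬ (F i ∣ F j) := by
    intro i j hne hdvd
    exact hne (hFinj (eq_of_monic_of_associated (hFm i) (hFm j)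
      ((hFirr i).associated_of_dvd (hFirr j) hdvd)))
  have hFcop : ∀ i j : Fin r, i ≠ j → IsCoprime (F i) (F j) := fun i j hne =>
    (hFirr i).coprime_iff_not_dvd.mpr (hFnd i j hne)
  have hFprime : ∀ j, Prime (F j) := fun j =>
    (UniqueFactorizationMonoid.irreducible_iff_prime).mp (hFirr j)
  have hdvdΦ : hK ∣ Phi f := by
    rw [← hΦf', hhK]
    exact Polynomial.map_dvd _ (minpoly.dvd _ _ haevalΦf)
  have hevalhK : Polynomial.eval t hK = 0 := by
    rw [hhK, eval_map, ← aeval_def]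
    exact minpoly.aeval _ _
  have hj0K : F j0 ∣ hK := by
    rw [hF1]
    exact dvd_iff_isRoot.mpr hevalhK
  set B : Finset (Fin r) := Finset.univ.filter (fun j => F j ∣ hK) with hBdef
  have hj0B : j0 ∈ B := Finset.mem_filter.mpr ⟨Finset.mem_univ _, hj0K⟩
  have hBdvd : (∏ j ∈ B, F j) ∣ hK := by
    apply Finset.prod_dvd_of_coprime
    · intro i hi j hj hij
      exact hFcop i j hij
    · intro i hi
      exact (Finset.mem_filter.mp hi).2
  have hKdvdB : hK ∣ ∏ j ∈ B, F j := by
    have hsplit : Phi f = (∏ j ∈ B, F j) * ∏ j ∈ Finset.univ.filter (fun j => ¬ F j ∣ hK), F j := by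
      rw [hfact, hBdef, Finset.prod_filter_mul_prod_filter_not]
    have hcop : IsCoprime hK (∏ j ∈ Finset.univ.filter (fun j => ¬ F j ∣ hK), F j) := by
      apply IsCoprime.prod_right
      intro j hj
      exact ((hFirr j).coprime_iff_not_dvd.mpr (Finset.mem_filter.mp hj).2).symm
    have h2 := hdvdΦ
    rw [hsplit] at h2
    exact hcop.dvd_of_dvd_mul_right h2
  have hKeqB : hK = ∏ j ∈ B, F j :=
    eq_of_monic_of_associated hKmonic (monic_prod_of_monic _ _ fun j _ => hFm j)
      (associated_of_dvd_dvd hKdvdB hBdvd)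
  obtain ⟨g', hg'⟩ := lift_poly L g (hP.1 A hA)
  have haevalg' : (Polynomial.aeval t) g' = 0 := by
    rw [aeval_def, ← eval_map, hg', hevalg]
  have hdvdg' : h ∣ g' := minpoly.dvd _ _ haevalg'
  have hdvdg : hK ∣ g := by
    rw [← hg', hhK]
    exact Polynomial.map_dvd _ hdvdg'
  have hBA : B ⊆ A := by
    intro j hj
    have hdj : F j ∣ g := dvd_trans (Finset.mem_filter.mp hj).2 hdvdg
    obtain ⟨i, hiA, hdi⟩ := (hFprime j).exists_mem_finset_dvd hdj
    by_cases hji : j = i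
    · rwa [hji]
    · exact absurd hdi (hFnd j i hji)
  have hKg : hK = g := by
    by_contra hne0
    have hBneA : B ≠ A := by
      intro hh
      apply hne0
      rw [hKeqB, hh]
    have hBss : B ⊂ A := ssubset_of_subset_of_ne hBA hBneA
    have hABne : (A \ B).Nonempty := by
      rw [Finset.sdiff_nonempty]
      intro hsub
      exact hBneA (Finset.Subset.antisymm hBA hsub)
    have hBne : B.Nonempty := ⟨j0, hj0B⟩
    have hBneAB : B ≠ A \ B := by
      intro hh
      have h2 := hj0B
      rw [hh] at h2
      exact (Finset.mem_sdiff.mp h2).2 hj0B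
    have hdisjA : ∀ Cp ∈ P.parts.erase A, Disjoint Cp A := by
      intro Cp hCp
      exact P.disjoint (Finset.mem_erase.mp hCp).2 hA (Finset.mem_erase.mp hCp).1
    have hBnotin : B ∉ insert (A \ B) (P.parts.erase A) := by
      intro hmem
      rcases Finset.mem_insert.mp hmem with hh | hh
      · exact hBneAB hh
      · exact Finset.disjoint_left.mp ((hdisjA B hh)) hj0B h1
    have hABnotin : (A \ B) ∉ P.parts.erase A := by
      intro hmem
      obtain ⟨x, hx⟩ := hABne
      exact Finset.disjoint_left.mp (hdisjA _ hmem) hx (Finset.mem_sdiff.mp hx).1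
    -- the refined partition
    set Qparts : Finset (Finset (Fin r)) := insert B (insert (A \ B) (P.parts.erase A)) with hQp
    have hQsup : Qparts.sup id = Finset.univ := by
      apply Finset.Subset.antisymm (Finset.subset_univ _)
      intro x _
      rw [Finset.mem_sup]
      by_cases hxA : x ∈ A
      · by_cases hxB : x ∈ B
        · exact ⟨B, by simp [hQp], hxB⟩
        · exact ⟨A \ B, by simp [hQp], Finset.mem_sdiff.mpr ⟨hxA, hxB⟩⟩
      · have hx2 : x ∈ P.parts.sup id := by rw [P.sup_parts]; exact Finset.mem_univ x
        obtain ⟨Cp, hCp, hxCp⟩ := Finset.mem_sup.mp hx2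
        have hCpA : Cp ≠ A := by
          intro hh
          exact hxA (hh ▸ hxCp)
        refine ⟨Cp, ?_, hxCp⟩
        rw [hQp]
        exact Finset.mem_insert_of_mem (Finset.mem_insert_of_mem
          (Finset.mem_erase.mpr ⟨hCpA, hCp⟩))
    have hQdisj : (Qparts : Set (Finset (Fin r))).PairwiseDisjoint id := by
      intro x hx y hy hxy
      simp only [hQp, Finset.coe_insert, Set.mem_insert_iff, Finset.mem_coe] at hx hy
      have hBAB : Disjoint B (A \ B) := Finset.disjoint_sdiff
      rcases hx with rfl | rfl | hx <;> rcases hy with rfl | rfl | hy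
      · exact absurd rfl hxy
      · exact hBAB
      · exact ((hdisjA y hy).mono_right hBA).symm
      · exact hBAB.symm
      · exact absurd rfl hxy
      · exact ((hdisjA y hy).mono_right Finset.sdiff_subset).symm
      · exact (hdisjA x hx).mono_right hBA
      · exact (hdisjA x hx).mono_right Finset.sdiff_subset
      · exact P.disjoint (Finset.mem_erase.mp hx).2 (Finset.mem_erase.mp hy).2 hxy
    have hQbot : ⊥ ∉ Qparts := by
      rw [hQp]
      intro hmem
      rcases Finset.mem_insert.mp hmem with hh | hh
      · exact Finset.not_nonempty_empty (hh ▸ hBne)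
      · rcases Finset.mem_insert.mp hh with hh2 | hh2
        · exact Finset.not_nonempty_empty (hh2 ▸ hABne)
        · exact P.bot_notMem (Finset.mem_of_mem_erase hh2)
    set Q : Finpartition (Finset.univ : Finset (Fin r)) :=
      ⟨Qparts, Finset.supIndep_iff_pairwiseDisjoint.mpr hQdisj, hQsup, hQbot⟩ with hQ
    -- Q has the products property
    have hQprods : ProdsIn F (L : Set (RatFunc K)) Q := by
      intro A' hA' m
      have hA'' : A' ∈ Qparts := hA'
      rcases Finset.mem_insert.mp hA'' with rfl | hh
      · -- A' = B
        rw [← hKeqB, hhK, coeff_map]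
        exact SetLike.coe_mem _
      · rcases Finset.mem_insert.mp hh with rfl | hh2
        · -- A' = A \ B
          obtain ⟨u, hu⟩ := hdvdg'
          have hmap : g = hK * u.map (algebraMap (↥L) (RatFunc K)) := by
            rw [← hg', hu, Polynomial.map_mul, hhK]
          have hprod : (∏ j ∈ A \ B, F j) * hK = g := by
            rw [hKeqB, hg]
            exact Finset.prod_sdiff hBA
          have heq : (∏ j ∈ A \ B, F j) = u.map (algebraMap (↥L) (RatFunc K)) := by
            apply mul_left_cancel₀ hKmonic.ne_zero
            rw [← hmap, ← hprod, mul_comm]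
          rw [heq, coeff_map]
          exact SetLike.coe_mem _
        · exact hP.1 A' (Finset.mem_of_mem_erase hh2) m
    have hcard : Q.parts.card = P.parts.card + 1 := by
      have hAp : 1 ≤ P.parts.card := Finset.card_pos.mpr ⟨A, hA⟩
      have h6 : Q.parts = Qparts := rfl
      rw [h6, hQp, Finset.card_insert_of_notMem hBnotin,
        Finset.card_insert_of_notMem hABnotin, Finset.card_erase_of_mem hA]
      omega
    have := hP.2 Q hQprods
    omega
  -- degree of L
  have hfinL : Module.finrank L (RatFunc K) = g.natDegree := by
    rw [finrank_eq_minpoly_natDegree L hintL, ← hKg, hhK,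
      natDegree_map_eq_of_injective hginj]
  -- now the field K(c)
  have hcmem : c ∈ L := by
    rw [← hm₀]
    exact hP.1 A hA m₀
  set M : IntermediateField K (RatFunc K) := IntermediateField.adjoin K {c} with hM
  have hML : M ≤ L := by
    rw [hM, IntermediateField.adjoin_le_iff]
    simpa using hcmem
  -- Φ_c has coefficients in M
  have hΦccoeff : ∀ i, (Phi c).coeff i ∈ M := by
    intro i
    rw [coeff_Phi]
    refine sub_mem ?_ (mul_mem (IntermediateField.mem_adjoin_simple_self K c) ?_) <;>
      · rw [← RatFunc.algebraMap_eq_C]; exact M.algebraMap_mem _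
  obtain ⟨Φc', hΦc'⟩ := lift_poly M (Phi c) hΦccoeff
  have hΦc'ne : Φc' ≠ 0 := by
    intro hzz
    apply Phi_ne_zero c hcK
    rw [← hΦc', hzz, Polynomial.map_zero]
  have haevalΦc : (Polynomial.aeval t) Φc' = 0 := by
    rw [aeval_def, ← eval_map, hΦc', eval_X_Phi]
  have hintM : IsIntegral M t := IsAlgebraic.isIntegral ⟨Φc', hΦc'ne, haevalΦc⟩
  have hfdM : FiniteDimensional M (RatFunc K) := fd_of_integral M hintM
  -- [K(t) : M] ≤ n
  have hfinM : Module.finrank M (RatFunc K) ≤ max c.num.natDegree c.denom.natDegree := by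
    rw [finrank_eq_minpoly_natDegree M hintM, ← natDegree_Phi c hcK]
    have hdvd : minpoly (↥M) t ∣ Φc' := minpoly.dvd _ _ haevalΦc
    calc (minpoly (↥M) t).natDegree ≤ Φc'.natDegree := natDegree_le_of_dvd hdvd hΦc'ne
      _ = (Phi c).natDegree := by
          rw [← hΦc', natDegree_map_eq_of_injective (algebraMap (↥M) (RatFunc K)).injective]
  -- g divides Phi c
  have hgdvdΦc : g ∣ Phi c := by
    obtain ⟨ΦcL', hΦcL'⟩ := lift_poly L (Phi c) (fun i => hML (hΦccoeff i))
    have haevalΦcL : (Polynomial.aeval t) ΦcL' = 0 := by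
      rw [aeval_def, ← eval_map, hΦcL', eval_X_Phi]
    have h1 : h ∣ ΦcL' := minpoly.dvd _ _ haevalΦcL
    rw [← hKg, ← hΦcL', hhK]
    exact Polynomial.map_dvd _ h1
  -- crux
  have hcrux := crux c hcK g hgmonic hgdvdΦc m₀ hm₀
  -- conclude
  symm
  apply IntermediateField.eq_of_le_of_finrank_le' hML
  rw [hfinL]
  exact le_trans hfinM hcrux
end
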